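/- arXiv:1507.05054 — 4 statements merged into one kernel-verified Lean document; each statement's English description precedes it below -/
import Mathlib

section
/- Let t_1, ..., t_n be pairwise distinct elements of a field. For a sequence (i_1, ..., i_m) of distinct indices define f(i_1,...,i_m) = 1/((t_{i_2}-t_{i_1})(t_{i_3}-t_{i_2})···(t_{i_m}-t_{i_{m-1}})). Then for any list ℓ of distinct indices containing j but not i, the sum of f(ℓ') over all lists ℓ' of distinct indices such that ℓ is obtained from ℓ' by dropping the entry i and i precedes j in ℓ' equals f(ℓ)/(t_j - t_i). -/
/-- `consecProd t l` is `f(i_1,...,i_m) = ∏ 1/(t_{i_{s+1}} - t_{i_s})`, the product of the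
inverses of consecutive differences along the list `l`. -/
def consecProd {n : ℕ} {K : Type*} [Field K] (t : Fin n → K) (l : List (Fin n)) : K :=
  ((l.zip l.tail).map fun p => (t p.2 - t p.1)⁻¹).prod

lemma consecProd_cons_cons {n : ℕ} {K : Type*} [Field K] (t : Fin n → K) (x y : Fin n)
    (l : List (Fin n)) :
    consecProd t (x :: y :: l) = (t y - t x)⁻¹ * consecProd t (y :: l) := by
  simp [consecProd]

lemma telescope_aux {K : Type*} [Field K] (A B I J Q : K) (n1 : J - I ≠ 0)
    (n2 : B - A ≠ 0) (n3 : B - I ≠ 0) (n4 : A - I ≠ 0) (n5 : I - A ≠ 0) :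
    (B - A)⁻¹ * (Q / (J - I) - (B - I)⁻¹ * Q) + (I - A)⁻¹ * ((B - I)⁻¹ * Q) +
      (A - I)⁻¹ * ((B - A)⁻¹ * Q) = (B - A)⁻¹ * Q / (J - I) := by
  have core : (I - A)⁻¹ * (B - I)⁻¹ + (A - I)⁻¹ * (B - A)⁻¹ = (B - A)⁻¹ * (B - I)⁻¹ := by
    field_simp
    ring
  have expand : (B - A)⁻¹ * (Q / (J - I) - (B - I)⁻¹ * Q) + (I - A)⁻¹ * ((B - I)⁻¹ * Q) +
      (A - I)⁻¹ * ((B - A)⁻¹ * Q) =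
      (B - A)⁻¹ * Q / (J - I) - (B - A)⁻¹ * (B - I)⁻¹ * Q +
        ((I - A)⁻¹ * (B - I)⁻¹ + (A - I)⁻¹ * (B - A)⁻¹) * Q := by ring
  rw [expand, core]
  ring

set_option maxHeartbeats 1000000

/-- Telescoping identity: with `t_1, ..., t_n` pairwise distinct, for a duplicate-free list `ℓ`
not containing `i` and containing `j`, the sum of `f(ℓ')` over all lists `ℓ'` obtained from `ℓ`
by inserting `i` at a position before that of `j` (i.e. such that dropping `i` from `ℓ'` yields
`ℓ` and `i` precedes `j` in `ℓ'`) equals `f(ℓ)/(t_j - t_i)`. -/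
theorem stmt1 {n : ℕ} {K : Type*} [Field K] (t : Fin n → K) (ht : Function.Injective t)
    (ℓ : List (Fin n)) (hnd : ℓ.Nodup) (i j : Fin n) (hi : i ∉ ℓ) (hj : j ∈ ℓ) :
    ∑ k ∈ Finset.range (ℓ.idxOf j + 1), consecProd t (ℓ.insertIdx k i) =
      consecProd t ℓ / (t j - t i) := by
  induction ℓ generalizing j with
  | nil => simp at hj
  | cons a l IH =>
    have hia : i ≠ a := fun h => hi (h ▸ List.mem_cons_self)
    have hil : i ∉ l := fun h => hi (List.mem_cons_of_mem a h)
    have hndl : l.Nodup := (List.nodup_cons.mp hnd).2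
    have hal : a ∉ l := (List.nodup_cons.mp hnd).1
    rcases eq_or_ne j a with rfl | hja
    · rw [List.idxOf_cons_self, zero_add, Finset.sum_range_one]
      show consecProd t (i :: j :: l) = _
      rw [consecProd_cons_cons, div_eq_inv_mul]
    · have hjl : j ∈ l := by rcases List.mem_cons.mp hj with h | h; exact absurd h hja; exact h
      obtain ⟨b, l', rfl⟩ : ∃ b l', l = b :: l' := by
        cases l with
        | nil => simp at hjl
        | cons b l' => exact ⟨b, l', rfl⟩
      have hib : i ≠ b := fun h => hil (h ▸ List.mem_cons_self)
      have hab : a ≠ b := fun h => hal (h ▸ List.mem_cons_self)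
      have hji : j ≠ i := fun h => hil (h ▸ hjl)
      have h1 : t j - t i ≠ 0 := sub_ne_zero.mpr fun h => hji (ht h)
      have h2 : t b - t a ≠ 0 := sub_ne_zero.mpr fun h => hab.symm (ht h)
      have h3 : t b - t i ≠ 0 := sub_ne_zero.mpr fun h => hib.symm (ht h)
      have h4 : t a - t i ≠ 0 := sub_ne_zero.mpr fun h => hia.symm (ht h)
      have h5 : t i - t a ≠ 0 := sub_ne_zero.mpr fun h => hia (ht h)
      rw [List.idxOf_cons_ne _ (Ne.symm hja)]
      have key := IH hndl j hil hjl
      set p := List.idxOf j (b :: l') with hp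
      rw [Nat.succ_eq_add_one, Finset.sum_range_succ' _ (p + 1)]
      simp only [List.insertIdx_succ_cons]
      rw [Finset.sum_range_succ' _ p]
      have hc : ∀ k, consecProd t (a :: b :: List.insertIdx l' k i) =
          (t b - t a)⁻¹ * consecProd t (List.insertIdx (b :: l') (k + 1) i) := by
        intro k
        rw [List.insertIdx_succ_cons, consecProd_cons_cons]
      simp only [List.insertIdx_succ_cons, hc, ← Finset.mul_sum]
      rw [Finset.sum_range_succ' _ p] at key
      have hS : ∑ k ∈ Finset.range p, consecProd t (List.insertIdx (b :: l') (k + 1) i) =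
          consecProd t (b :: l') / (t j - t i) - consecProd t (List.insertIdx (b :: l') 0 i) := by
        rw [← key]; ring
      simp only [List.insertIdx_succ_cons, List.insertIdx_zero] at hS
      simp only [List.insertIdx_zero]
      rw [hS]
      show (t b - t a)⁻¹ * (consecProd t (b :: l') / (t j - t i) - consecProd t (i :: b :: l')) +
          consecProd t (a :: i :: b :: l') + consecProd t (i :: a :: b :: l') =
          consecProd t (a :: b :: l') / (t j - t i)
      rw [consecProd_cons_cons t i b, consecProd_cons_cons t a i, consecProd_cons_cons t i a,
        consecProd_cons_cons t a b, consecProd_cons_cons t i b]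
      exact telescope_aux _ _ _ _ _ h1 h2 h3 h4 h5
end

section
/- Let M be a matroid on ground set {1,...,n} and let P(M) ⊆ ℝ^n be the convex hull of the indicator vectors e_B of the bases B of M. Then the convex hull of two vertices e_B and e_{B'} forms an edge of P(M) if and only if the symmetric difference of B and B' has exactly two elements (equivalently, B and B' differ by a single basis exchange). -/
open scoped symmDiff

/-- The indicator vector `e_B = Σ_{i∈B} e_i ∈ ℝ^n` of a subset `B ⊆ {1,...,n}`. -/
noncomputable def indVec (n : ℕ) (B : Set (Fin n)) : Fin n → ℝ :=
  B.indicator 1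

/-- The matroid base polytope `P(M)`: the convex hull of the indicator vectors of the
bases of `M`. -/
noncomputable def basePolytope (n : ℕ) (M : Matroid (Fin n)) : Set (Fin n → ℝ) :=
  convexHull ℝ {x | ∃ B, M.IsBase B ∧ x = indVec n B}

/-!
A segment `[e_B, e_{B'}]` is a face of `P(M)` as soon as it is the set of maximisers of a linear
functional. If `|B ∆ B'| = 2`, the functional `⟨e_B + e_{B'}, ·⟩` does it: on a base `A` it equals
`|B ∩ A| + |B' ∩ A| ≤ |A| + |B ∩ B'|`, with equality only for `A = B` and `A = B'`. Conversely,
for `i ∈ B \ B'` symmetric exchange yields `j ∈ B' \ B` such that `B₁ = B - i + j` and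
`B₂ = B' - j + i` are bases; as `e_{B₁} + e_{B₂} = e_B + e_{B'}`, extremality forces `e_{B₁}` onto
the segment, and its `i`-th coordinate then forces `B₁ = B'`.
-/

open Set

section Face

variable {𝕜 E : Type*} [Field 𝕜] [LinearOrder 𝕜] [IsStrictOrderedRing 𝕜] [AddCommGroup E]
  [Module 𝕜 E] {f : E →ₗ[𝕜] 𝕜} {a b x : E} {A S : Set E} {m : 𝕜}

lemma LinearMap.eq_right_of_mem_segment (hx : x ∈ segment 𝕜 a b) (hxb : f x = f b)
    (hab : f a ≠ f b) : x = b := by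
  obtain ⟨s, t, -, -, hst, rfl⟩ := hx
  obtain rfl : s = 0 := by
    rw [map_add, map_smul, map_smul, smul_eq_mul, smul_eq_mul] at hxb
    exact (mul_eq_zero.1 (by linear_combination hxb - f b * hst)).resolve_right
      (sub_ne_zero.2 hab)
  simp_all

lemma isExtreme_sep_eq_of_forall_le (hA : ∀ x ∈ A, f x ≤ m) :
    IsExtreme 𝕜 A {x ∈ A | f x = m} := by
  refine ⟨sep_subset _ _, ?_⟩
  rintro x₁ hx₁ x₂ hx₂ x ⟨-, hfx⟩ ⟨s, t, hs, ht, hst, rfl⟩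
  have hsum : s * f x₁ + t * f x₂ = m := by
    rw [← hfx, map_add, map_smul, map_smul, smul_eq_mul, smul_eq_mul]
  have hgap : s * (m - f x₁) + t * (m - f x₂) = 0 := by linear_combination m * hst - hsum
  have hgap₂ := mul_nonneg ht.le (sub_nonneg.2 (hA x₂ hx₂))
  exact ⟨hx₁, le_antisymm (hA x₁ hx₁) (by nlinarith)⟩

lemma convexHull_sep_eq_of_forall_le (hS : ∀ x ∈ S, f x ≤ m) :
    {x ∈ convexHull 𝕜 S | f x = m} = convexHull 𝕜 {x ∈ S | f x = m} := by
  refine Subset.antisymm (fun x ⟨hx, hfx⟩ ↦ ?_) <| convexHull_min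
    (fun y hy ↦ ⟨subset_convexHull 𝕜 S hy.1, hy.2⟩)
    ((convex_convexHull 𝕜 S).inter (convex_hyperplane f.isLinear m))
  set T := {x ∈ S | f x = m}
  set U := {x ∈ S | f x < m}
  have hTU : S = T ∪ U := by
    ext y
    simp only [mem_union, mem_sep_iff, T, U, ← and_or_left]
    exact ⟨fun hy ↦ ⟨hy, (hS y hy).eq_or_lt⟩, And.left⟩
  have hU : convexHull 𝕜 U ⊆ {y | f y < m} :=
    convexHull_min (fun y hy ↦ hy.2) (convex_halfSpace_lt f.isLinear m)
  rcases U.eq_empty_or_nonempty with hU₀ | hU₀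
  · rwa [hTU, hU₀, union_empty] at hx
  rcases T.eq_empty_or_nonempty with hT₀ | hT₀
  · rw [hTU, hT₀, empty_union] at hx
    exact absurd hfx (hU hx).ne
  rw [hTU, convexHull_union hT₀ hU₀, mem_convexJoin] at hx
  obtain ⟨a, ha, b, hb, hxab⟩ := hx
  have hfa : f a = m :=
    convexHull_min (fun y hy ↦ hy.2) (convex_hyperplane f.isLinear m) ha
  rw [segment_symm] at hxab
  rwa [f.eq_right_of_mem_segment hxab (hfx.trans hfa.symm) (hfa ▸ (hU hb).ne)]

lemma isExtreme_convexHull_sep_eq_of_forall_le (hS : ∀ x ∈ S, f x ≤ m) :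
    IsExtreme 𝕜 (convexHull 𝕜 S) (convexHull 𝕜 {x ∈ S | f x = m}) := by
  rw [← convexHull_sep_eq_of_forall_le hS]
  exact isExtreme_sep_eq_of_forall_le fun x hx ↦
    convexHull_min hS (convex_halfSpace_le f.isLinear m) hx

end Face

namespace Set

variable {α : Type*} {A B B' : Set α} {i j x : α}

lemma symmDiff_insert_sdiff_singleton (hi : i ∈ B) (hj : j ∉ B) :
    B ∆ insert j (B \ {i}) = {i, j} := by
  ext k
  by_cases hki : k = i <;> by_cases hkj : k = j <;> simp_all [mem_symmDiff]

variable [Finite α]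

lemma ncard_inter_add_ncard_inter (A B B' : Set α) :
    (B ∩ A).ncard + (B' ∩ A).ncard = ((B ∪ B') ∩ A).ncard + ((B ∩ B') ∩ A).ncard := by
  rw [← ncard_union_add_ncard_inter, union_inter_distrib_right,
    inter_inter_distrib_right B B' A]

lemma ncard_inter_add_ncard_inter_le (A B B' : Set α) :
    (B ∩ A).ncard + (B' ∩ A).ncard ≤ A.ncard + (B ∩ B').ncard := by
  rw [ncard_inter_add_ncard_inter]
  exact add_le_add (ncard_inter_le_ncard_right _ _) (ncard_inter_le_ncard_left _ _)

lemma eq_of_inter_subset_of_mem_sdiff (hBB' : (B \ B').ncard = 1) (hI : B ∩ B' ⊆ A)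
    (hA : A.ncard ≤ B.ncard) (hxA : x ∈ A) (hxB : x ∈ B \ B') : A = B := by
  obtain ⟨y, hy⟩ := ncard_eq_one.1 hBB'
  refine (eq_of_subset_of_ncard_le (fun z hzB ↦ ?_) hA).symm
  by_cases hzB' : z ∈ B'
  · exact hI ⟨hzB, hzB'⟩
  · have hz : z ∈ B \ B' := ⟨hzB, hzB'⟩
    rw [hy] at hz hxB
    rwa [hz.trans hxB.symm]

lemma eq_or_eq_of_le_ncard_inter_add_ncard_inter (hBB' : (B \ B').ncard = 1)
    (hB'B : (B' \ B).ncard = 1) (hA : A.ncard = B.ncard)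
    (h : B.ncard + (B ∩ B').ncard ≤ (B ∩ A).ncard + (B' ∩ A).ncard) : A = B ∨ A = B' := by
  have hB := ncard_inter_add_ncard_sdiff_eq_ncard B B'
  have hB' := ncard_inter_add_ncard_sdiff_eq_ncard B' B
  rw [ncard_inter_add_ncard_inter] at h
  have hcup := ncard_inter_le_ncard_right (B ∪ B') A
  have hcap := ncard_inter_le_ncard_left (B ∩ B') A
  have hI : B ∩ B' ⊆ A :=
    inter_eq_left.1 <| eq_of_subset_of_ncard_le inter_subset_left (by omega)
  have hAU : A ⊆ B ∪ B' :=
    inter_eq_right.1 <| eq_of_subset_of_ncard_le inter_subset_right (by omega)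
  obtain ⟨x, hxA, hxI⟩ := not_subset.1 fun hAI : A ⊆ B ∩ B' ↦ by
    have := ncard_le_ncard hAI
    omega
  rcases hAU hxA with hxB | hxB'
  · exact .inl <| eq_of_inter_subset_of_mem_sdiff hBB' hI hA.le hxA
      ⟨hxB, fun h ↦ hxI ⟨hxB, h⟩⟩
  · rw [inter_comm] at hI hB
    exact .inr <| eq_of_inter_subset_of_mem_sdiff hB'B hI (by omega) hxA
      ⟨hxB', fun h ↦ hxI ⟨h, hxB'⟩⟩

end Set

namespace Matroid

variable {α : Type*} {M : Matroid α} {A B : Set α} {x : α}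

/-- The exchanged element `y` is found in the fundamental circuit of `x` over `B` and the
fundamental cocircuit of `x` over `A`, which share `x` and hence a second element. -/
lemma IsBase.exists_symm_exchange (hA : M.IsBase A) (hB : M.IsBase B) (hx : x ∈ A \ B) :
    ∃ y ∈ B \ A, M.IsBase (insert y (A \ {x})) ∧ M.IsBase (insert x (B \ {y})) := by
  have hxE : x ∈ M.E := hA.subset_ground hx.1
  obtain ⟨y, ⟨hyC, hyK⟩, hyx⟩ :=
    ((hB.fundCircuit_isCircuit hxE hx.2).isCocircuit_inter_nontrivial
      (fundCocircuit_isCocircuit hx.1 hA) ⟨x, mem_fundCircuit .., mem_fundCocircuit ..⟩).exists_ne x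
  have hyB : y ∈ B := by
    simpa [hyx] using M.fundCircuit_subset_insert x B hyC
  have hyA : y ∉ A := fun hyA ↦ hyx <| by
    simpa using (M.fundCocircuit_inter_eq hx.1).subset ⟨hyK, hyA⟩
  have hyE : y ∈ M.E := hB.subset_ground hyB
  refine ⟨y, ⟨hyB, hyA⟩, ?_, ?_⟩
  · rw [hA.mem_fundCocircuit_iff_mem_fundCircuit,
      hA.indep.mem_fundCircuit_iff (by rwa [hA.closure_eq]) hyA] at hyK
    rw [← insert_sdiff_singleton_comm hyx] at hyK
    exact hA.exchange_isBase_of_indep hyA hyK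
  · rw [hB.indep.mem_fundCircuit_iff (by rwa [hB.closure_eq]) hx.2,
      ← insert_sdiff_singleton_comm (Ne.symm hyx)] at hyC
    exact hB.exchange_isBase_of_indep hx.2 hyC

end Matroid

section BasePolytope

variable {n : ℕ} {M : Matroid (Fin n)} {B B' : Set (Fin n)}

lemma indVec_injective : Function.Injective (indVec n) :=
  fun _ _ h ↦ indicator_one_inj ℝ h

lemma indVec_dotProduct_indVec (A A' : Set (Fin n)) :
    indVec n A ⬝ᵥ indVec n A' = (A ∩ A').ncard := by
  classical
  simp only [dotProduct, indVec, indicator_apply, Pi.one_apply, mul_ite, mul_one, mul_zero,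
    ← ite_and, Finset.sum_boole, ncard_eq_toFinset_card']
  congr 2
  ext
  simp [and_comm]

lemma indVec_mem_basePolytope (hB : M.IsBase B) : indVec n B ∈ basePolytope n M :=
  subset_convexHull ℝ _ ⟨B, hB, rfl⟩

lemma indVec_add_indVec_exchange {i j : Fin n} (hi : i ∈ B \ B') (hj : j ∈ B' \ B) :
    indVec n (insert j (B \ {i})) + indVec n (insert i (B' \ {j})) =
      indVec n B + indVec n B' := by
  ext k
  by_cases hki : k = i <;> by_cases hkj : k = j <;> by_cases hkB : k ∈ B <;>
    by_cases hkB' : k ∈ B' <;> simp_all [indVec]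

lemma ncard_symmDiff_eq_two_of_isExtreme (hB : M.IsBase B) (hB' : M.IsBase B') (hne : B ≠ B')
    (hF : IsExtreme ℝ (basePolytope n M) (segment ℝ (indVec n B) (indVec n B'))) :
    (B ∆ B').ncard = 2 := by
  obtain ⟨i, hi⟩ : (B \ B').Nonempty :=
    sdiff_nonempty.2 fun h ↦ hne (hB.eq_of_subset_isBase hB' h)
  obtain ⟨j, hj, hB₁, hB₂⟩ := hB.exists_symm_exchange hB' hi
  have hmid : midpoint ℝ (indVec n (insert j (B \ {i}))) (indVec n (insert i (B' \ {j}))) =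
      midpoint ℝ (indVec n B) (indVec n B') := by
    rw [midpoint_eq_smul_add, midpoint_eq_smul_add, indVec_add_indVec_exchange hi hj]
  have hseg : indVec n (insert j (B \ {i})) ∈ segment ℝ (indVec n B) (indVec n B') :=
    hF.left_mem_of_mem_openSegment (indVec_mem_basePolytope hB₁) (indVec_mem_basePolytope hB₂)
      (midpoint_mem_segment _ _) (hmid ▸ midpoint_mem_openSegment _ _)
  have hij : i ≠ j := fun h ↦ hj.2 (h ▸ hi.1)
  have hB₁B' : insert j (B \ {i}) = B' := indVec_injective <|
    (LinearMap.proj i).eq_right_of_mem_segment hseg (by simp [indVec, hi.2, hij])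
      (by simp [indVec, hi.1, hi.2])
  rw [← hB₁B', symmDiff_insert_sdiff_singleton hi.1 hj.2, ncard_pair hij]

lemma isExtreme_segment_of_ncard_symmDiff_eq_two (hB : M.IsBase B) (hB' : M.IsBase B')
    (h : (B ∆ B').ncard = 2) :
    IsExtreme ℝ (basePolytope n M) (segment ℝ (indVec n B) (indVec n B')) := by
  have hsplit : (B \ B').ncard + (B' \ B).ncard = 2 := by
    rw [← h, Set.symmDiff_def, ncard_union_eq disjoint_sdiff_sdiff]
  have hBB' : (B \ B').ncard = 1 := by have := hB.ncard_sdiff_comm hB'; omega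
  have hB'B : (B' \ B).ncard = 1 := by omega
  have hcard {A : Set (Fin n)} (hA : M.IsBase A) : A.ncard = B.ncard :=
    hA.ncard_eq_ncard_of_isBase hB
  set f := dotProductBilin ℝ ℝ (indVec n B + indVec n B')
  have hf (A : Set (Fin n)) : f (indVec n A) = ((B ∩ A).ncard + (B' ∩ A).ncard : ℕ) := by
    simp [f, indVec_dotProduct_indVec]
  have hle : ∀ x ∈ {x | ∃ A, M.IsBase A ∧ x = indVec n A},
      f x ≤ (B.ncard + (B ∩ B').ncard : ℕ) := by
    rintro _ ⟨A, hA, rfl⟩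
    rw [hf, Nat.cast_le, ← hcard hA]
    exact ncard_inter_add_ncard_inter_le A B B'
  have hmax : {x ∈ {x | ∃ A, M.IsBase A ∧ x = indVec n A} |
      f x = (B.ncard + (B ∩ B').ncard : ℕ)} = {indVec n B, indVec n B'} := by
    ext x
    constructor
    · rintro ⟨⟨A, hA, rfl⟩, hA_max⟩
      rw [hf, Nat.cast_inj] at hA_max
      rcases eq_or_eq_of_le_ncard_inter_add_ncard_inter hBB' hB'B (hcard hA) hA_max.ge
        with rfl | rfl <;> simp
    · rintro (rfl | rfl)
      · exact ⟨⟨B, hB, rfl⟩, by rw [hf, inter_self, inter_comm B' B]⟩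
      · exact ⟨⟨B', hB', rfl⟩, by rw [hf, inter_self, hcard hB', add_comm]⟩
  rw [← convexHull_pair, ← hmax]
  exact isExtreme_convexHull_sep_eq_of_forall_le hle

end BasePolytope

theorem stmt5_general (n : ℕ) (M : Matroid (Fin n))
    (B B' : Set (Fin n)) (hB : M.IsBase B) (hB' : M.IsBase B') (hne : B ≠ B') :
    IsExtreme ℝ (basePolytope n M) (segment ℝ (indVec n B) (indVec n B')) ↔
      (B ∆ B').ncard = 2 :=
  ⟨ncard_symmDiff_eq_two_of_isExtreme hB hB' hne,
    isExtreme_segment_of_ncard_symmDiff_eq_two hB hB'⟩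

/-- For distinct bases `B, B'` of a matroid `M` on `{1,...,n}`, the segment between the
vertices `e_B` and `e_{B'}` is an edge (a face, necessarily 1-dimensional as the endpoints
are distinct) of the matroid base polytope `P(M)` if and only if the symmetric difference
of `B` and `B'` has exactly two elements, i.e. `B` and `B'` differ by a single exchange. -/
theorem stmt5 (n : ℕ) (M : Matroid (Fin n)) (hE : M.E = Set.univ)
    (B B' : Set (Fin n)) (hB : M.IsBase B) (hB' : M.IsBase B') (hne : B ≠ B') :
    IsExtreme ℝ (basePolytope n M) (segment ℝ (indVec n B) (indVec n B')) ↔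
      (B ∆ B').ncard = 2 :=
  stmt5_general n M B B' hB hB' hne
end

section
/- Let λ be a partition with λ_1 ≤ n - r and at most r parts, and let SST(λ, r) be the set of semistandard Young tableaux of shape λ with entries in {1,...,r}. Then the factorial Schur polynomial Σ_{τ ∈ SST(λ,r)} ∏_{(i,j) ∈ λ} (u_{τ(i,j)} - t_{τ(i,j)+j-i}) is a symmetric polynomial in the variables u_1, ..., u_r (with coefficients in ℤ[t_1,...,t_n]). -/
open Finset MvPolynomial

noncomputable section

/-- The cells of the Young diagram of a partition `ν` with at most `p` parts:
pairs `⟨i, j⟩` with `j < ν i` (row `i`, column `j`, both 0-indexed). -/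
def cellsOf {p : ℕ} (ν : Fin p → ℕ) : Finset ((_ : Fin p) × ℕ) :=
  Finset.univ.sigma fun i => Finset.range (ν i)

/-- The semistandard Young tableaux of shape `ν` with entries in `{1,...,r}`
(encoded 0-indexed as `Fin r`): fillings of the cells weakly increasing along rows
and strictly increasing down columns. -/
def SSTFinset {p : ℕ} (ν : Fin p → ℕ) (r : ℕ) :
    Finset ({x // x ∈ cellsOf ν} → Fin r) :=
  Finset.univ.filter fun τ =>
    (∀ c d : {x // x ∈ cellsOf ν}, c.1.1 = d.1.1 → c.1.2 ≤ d.1.2 → τ c ≤ τ d) ∧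
    (∀ c d : {x // x ∈ cellsOf ν}, c.1.2 = d.1.2 → c.1.1 < d.1.1 → τ c < τ d)

/-- The Schur polynomial `s_ν(u_1,...,u_r)`, defined combinatorially as the sum over
semistandard tableaux of shape `ν` with entries in `{1,...,r}` of their monomials. -/
def schurP {p : ℕ} (ν : Fin p → ℕ) (r : ℕ) (R : Type*) [CommSemiring R] :
    MvPolynomial (Fin r) R :=
  ∑ τ ∈ SSTFinset ν r, ∏ c : {x // x ∈ cellsOf ν}, X (τ c)

/-- The finset of partitions with at most `M` parts, each part at most `B`,
encoded as antitone functions `Fin M → ℕ`. -/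
def Pars (M B : ℕ) : Finset (Fin M → ℕ) :=
  ((Finset.univ : Finset (Fin M → Fin (B + 1))).image fun f i => (f i : ℕ)).filter
    fun f => ∀ a b : Fin M, a ≤ b → f b ≤ f a

/-- Pad a partition with at most `p` parts to one with at most `N` parts by appending zeros. -/
def padTo {p : ℕ} (ν : Fin p → ℕ) (N : ℕ) : Fin N → ℕ :=
  fun i => if h : (i : ℕ) < p then ν ⟨i, h⟩ else 0

/-- The factorial Schur polynomial `Σ_{τ ∈ SST(ν,r)} ∏_{(i,j)∈ν} (u_{τ(i,j)} - t_{τ(i,j)+j-i})`,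
an element of `ℤ[t][u_1,...,u_r]` where the `t`-variables are indexed by `ℕ`
(the variable `X k : MvPolynomial ℕ ℤ` representing `t_{k+1}`; here entries, rows and
columns are 0-indexed, so the 0-indexed `t`-subscript of cell `c = (i,j)` with entry `τ c`
is `τ c + j - i`). -/
def factSchur {p : ℕ} (ν : Fin p → ℕ) (r : ℕ) :
    MvPolynomial (Fin r) (MvPolynomial ℕ ℤ) :=
  ∑ τ ∈ SSTFinset ν r, ∏ c : {x // x ∈ cellsOf ν},
    (X (τ c) - C (MvPolynomial.X ((τ c : ℕ) + c.1.2 - (c.1.1 : ℕ))))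

/-!
It suffices to prove invariance under each adjacent transposition `v ↔ w` with `w = v + 1`,
and for this we follow Bender and Knuth. Call a cell with entry `v` or `w` free if no other cell
of its column has entry `v` or `w`; the other entries `v` and `w` form vertical dominoes, `v` over
`w`. The free cells of a row are consecutive, and the semistandard tableaux with a given non-free
part (the frame) are exactly those obtained by filling the free segment of each row with some
entries `v` followed by entries `w`. A domino in column `j` with `v` in row `i` contributes
`(x_v - t_{v+j-i}) (x_w - t_{v+j-i})`, which is symmetric in `x_v, x_w`, and summing over the
fillings of a free segment of length `m` starting in column `s` of row `i` gives the divided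
difference `(f x_v - f x_w) / (x_v - x_w)` of `f z = ∏_{k ≤ m} (z - t_{v-i+s+k})`, which is
symmetric as well.
-/

section DividedDifference

variable {R : Type*} [CommRing R]

/-- The divided difference `(f x - f y) / (x - y)` of `f z = ∏_{k ≤ m} (z - t k)`, written
without division. -/
def prodDivDiff (t : ℕ → R) (m : ℕ) (x y : R) : R :=
  ∑ a ∈ range (m + 1), ∏ k ∈ range m, if k < a then x - t k else y - t (k + 1)

theorem sub_mul_prodDivDiff (t : ℕ → R) (m : ℕ) (x y : R) :
    (x - y) * prodDivDiff t m x y =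
      ∏ k ∈ range (m + 1), (x - t k) - ∏ k ∈ range (m + 1), (y - t k) := by
  induction m with
  | zero => simp [prodDivDiff]
  | succ m ih =>
    have split : prodDivDiff t (m + 1) x y =
        prodDivDiff t m x y * (y - t (m + 1)) + ∏ k ∈ range (m + 1), (x - t k) := by
      rw [prodDivDiff, sum_range_succ, prodDivDiff, sum_mul]
      congr 1
      · refine sum_congr rfl fun a ha => ?_
        rw [prod_range_succ, if_neg (by simp at ha; omega)]
      · exact prod_congr rfl fun k hk => if_pos (by simpa using hk)
    rw [split, prod_range_succ _ (m + 1), prod_range_succ _ (m + 1)]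
    linear_combination (y - t (m + 1)) * ih

theorem prodDivDiff_comm [IsDomain R] (t : ℕ → R) (m : ℕ) {x y : R} (hxy : x ≠ y) :
    prodDivDiff t m x y = prodDivDiff t m y x := by
  refine mul_left_cancel₀ (sub_ne_zero.2 hxy) ?_
  linear_combination sub_mul_prodDivDiff t m x y + sub_mul_prodDivDiff t m y x

end DividedDifference

theorem MvPolynomial.isSymmetric_of_rename_swap_succ {R : Type*} [CommSemiring R] {r : ℕ}
    {p : MvPolynomial (Fin r) R}
    (h : ∀ v w : Fin r, (w : ℕ) = v + 1 → rename (Equiv.swap v w) p = p) : p.IsSymmetric := by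
  intro σ
  cases r with
  | zero => rw [Subsingleton.elim σ 1, Equiv.Perm.coe_one, rename_id, AlgHom.id_apply]
  | succ m =>
    have hσ : σ ∈ Submonoid.closure
        (Set.range fun i : Fin m => Equiv.swap i.castSucc i.succ) := by
      rw [Equiv.Perm.mclosure_swap_castSucc_succ]
      exact Submonoid.mem_top σ
    induction hσ using Submonoid.closure_induction with
    | mem _ hx =>
      obtain ⟨i, rfl⟩ := hx
      exact h _ _ (by simp)
    | one => rw [Equiv.Perm.coe_one, rename_id, AlgHom.id_apply]
    | mul x y _ _ hx hy => rw [Equiv.Perm.coe_mul, ← rename_rename, hy, hx]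

theorem Finset.eq_Ico_of_ordConnected {s : Finset ℕ} (hs : (s : Set ℕ).OrdConnected) :
    s = Ico (sInf (s : Set ℕ)) (sInf (s : Set ℕ) + #s) := by
  rcases s.eq_empty_or_nonempty with rfl | hne
  · simp
  have hmin : sInf (s : Set ℕ) = s.min' hne :=
    le_antisymm (Nat.sInf_le (s.min'_mem hne)) (s.min'_le _ (Nat.sInf_mem (coe_nonempty.2 hne)))
  have hIcc : s = Icc (s.min' hne) (s.max' hne) := by
    ext x
    exact ⟨fun hx => mem_Icc.2 ⟨s.min'_le x hx, s.le_max' x hx⟩,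
      fun hx => hs.out (s.min'_mem hne) (s.max'_mem hne) (mem_Icc.1 hx)⟩
  have hcard : #s = s.max' hne + 1 - s.min' hne := by
    conv_lhs => rw [hIcc]
    exact Nat.card_Icc _ _
  have hle := s.min'_le _ (s.max'_mem hne)
  rw [hmin, hcard, show s.min' hne + (s.max' hne + 1 - s.min' hne) = s.max' hne + 1 by omega,
    Ico_add_one_right_eq_Icc]
  exact hIcc

namespace FactorialSchur

variable {r : ℕ} {ν : Fin r → ℕ}

abbrev Cell (ν : Fin r → ℕ) := {x // x ∈ cellsOf ν}

theorem Cell.col_lt (c : Cell ν) : c.1.2 < ν c.1.1 := by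
  simpa [cellsOf] using c.2

theorem Cell.ext_val {c d : Cell ν} (hrow : (c.1.1 : ℕ) = d.1.1) (hcol : c.1.2 = d.1.2) :
    c = d :=
  Subtype.ext <| Sigma.ext (Fin.ext hrow) (heq_of_eq hcol)

theorem Cell.exists_of_le (hν : Antitone ν) (c : Cell ν) {i j : ℕ} (hi : i ≤ c.1.1)
    (hj : j ≤ c.1.2) : ∃ e : Cell ν, (e.1.1 : ℕ) = i ∧ e.1.2 = j := by
  have hir : i < r := lt_of_le_of_lt hi c.1.1.2
  have hj' : j < ν ⟨i, hir⟩ :=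
    lt_of_le_of_lt hj (lt_of_lt_of_le c.col_lt (hν (Fin.le_def.2 hi)))
  exact ⟨⟨⟨⟨i, hir⟩, j⟩, by simpa [cellsOf] using hj'⟩, rfl, rfl⟩

structure IsSemistandard (τ : Cell ν → Fin r) : Prop where
  row_le : ∀ c d : Cell ν, (c.1.1 : ℕ) = d.1.1 → c.1.2 ≤ d.1.2 → (τ c : ℕ) ≤ τ d
  col_lt : ∀ c d : Cell ν, c.1.2 = d.1.2 → (c.1.1 : ℕ) < d.1.1 → (τ c : ℕ) < τ d

theorem mem_SSTFinset {τ : Cell ν → Fin r} : τ ∈ SSTFinset ν r ↔ IsSemistandard τ := by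
  simp only [SSTFinset, mem_filter, mem_univ, true_and, Fin.ext_iff, Fin.le_def, Fin.lt_def]
  exact ⟨fun h => ⟨h.1, h.2⟩, fun h => ⟨h.1, h.2⟩⟩

theorem IsSemistandard.col_le {τ : Cell ν → Fin r} (hτ : IsSemistandard τ) {c d : Cell ν}
    (hcol : c.1.2 = d.1.2) (hrow : (c.1.1 : ℕ) ≤ d.1.1) : (τ c : ℕ) ≤ τ d := by
  rcases hrow.lt_or_eq with h | h
  · exact (hτ.col_lt c d hcol h).le
  · rw [Cell.ext_val h hcol]

theorem IsSemistandard.row_eq_succ_of_col_eq (hν : Antitone ν) {τ : Cell ν → Fin r}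
    (hτ : IsSemistandard τ) {v : ℕ} {c d : Cell ν} (hcol : c.1.2 = d.1.2)
    (hrow : (c.1.1 : ℕ) < d.1.1) (hc : v ≤ τ c) (hd : (τ d : ℕ) ≤ v + 1) :
    (τ c : ℕ) = v ∧ (τ d : ℕ) = v + 1 ∧ (d.1.1 : ℕ) = c.1.1 + 1 := by
  obtain ⟨e, he_row, he_col⟩ := d.exists_of_le hν (i := c.1.1 + 1) hrow le_rfl
  have hce := hτ.col_lt c e (hcol.trans he_col.symm) (by omega)
  have hed := hτ.col_le he_col (by omega : (e.1.1 : ℕ) ≤ d.1.1)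
  refine ⟨by omega, by omega, ?_⟩
  by_contra hne
  have := hτ.col_lt e d he_col (by omega)
  omega

variable {S : Type*} [CommRing S]

/-- The subtraction `u + j - i` never truncates on a semistandard tableau, whose entries in row
`i` are at least `i`. -/
def cellFactor (x : Fin r → S) (t : ℕ → S) (u : Fin r) (c : Cell ν) : S :=
  x u - t (u + c.1.2 - c.1.1)

def tabWeight (x : Fin r → S) (t : ℕ → S) (τ : Cell ν → Fin r) : S :=
  ∏ c, cellFactor x t (τ c) c

section BenderKnuth

attribute [local instance 10] Classical.propDecidable

variable (τ : Cell ν → Fin r) (v w : Fin r)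

/-- The cells whose entries the Bender–Knuth involution for `v ↔ w` is free to change. -/
def IsFree (c : Cell ν) : Prop :=
  (τ c = v ∨ τ c = w) ∧ ∀ d : Cell ν, d.1.2 = c.1.2 → (τ d = v ∨ τ d = w) → d = c

def frame (c : Cell ν) : Option (Fin r) := if IsFree τ v w c then none else some (τ c)

def freeCells (i : Fin r) : Finset (Cell ν) := univ.filter fun c => IsFree τ v w c ∧ c.1.1 = i

def freeStart (i : Fin r) : ℕ :=
  sInf (((freeCells τ v w i).image fun c => c.1.2 : Finset ℕ) : Set ℕ)

def refill (a : Fin r → ℕ) (c : Cell ν) : Fin r :=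
  if IsFree τ v w c then (if c.1.2 < freeStart τ v w c.1.1 + a c.1.1 then v else w) else τ c

def countBox : Finset (Fin r → ℕ) :=
  Fintype.piFinset fun i => range (#(freeCells τ v w i) + 1)

def vCount (τ' : Cell ν → Fin r) (i : Fin r) : ℕ :=
  #((freeCells τ v w i).filter fun c => τ' c = v)

def IsPartner (d c : Cell ν) : Prop :=
  d.1.2 = c.1.2 ∧ (τ c = v ∧ τ d = w ∧ (d.1.1 : ℕ) = c.1.1 + 1 ∨
    τ c = w ∧ τ d = v ∧ (c.1.1 : ℕ) = d.1.1 + 1)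

def partner (c : Cell ν) : Cell ν := if h : ∃ d, IsPartner τ v w d c then h.choose else c

variable {τ v w}

theorem eq_or_eq_iff_of_succ (hw : (w : ℕ) = v + 1) {a : Fin r} :
    a = v ∨ a = w ↔ (v : ℕ) ≤ a ∧ (a : ℕ) ≤ v + 1 := by
  rw [Fin.ext_iff, Fin.ext_iff]
  omega

theorem mem_freeCells {i : Fin r} {c : Cell ν} :
    c ∈ freeCells τ v w i ↔ IsFree τ v w c ∧ c.1.1 = i := by
  simp [freeCells]

theorem injOn_col_freeCells (i : Fin r) :
    Set.InjOn (fun c : Cell ν => c.1.2) (freeCells τ v w i) := by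
  intro c hc d hd h
  rw [mem_coe, mem_freeCells] at hc hd
  exact Cell.ext_val (by rw [hc.2, hd.2]) h

theorem refill_of_isFree (a : Fin r → ℕ) {c : Cell ν} (hc : IsFree τ v w c) :
    refill τ v w a c = if c.1.2 < freeStart τ v w c.1.1 + a c.1.1 then v else w :=
  if_pos hc

theorem refill_of_not_isFree (a : Fin r → ℕ) {c : Cell ν} (hc : ¬ IsFree τ v w c) :
    refill τ v w a c = τ c :=
  if_neg hc

theorem refill_eq_or_eq (a : Fin r → ℕ) {c : Cell ν} (hc : IsFree τ v w c) :
    refill τ v w a c = v ∨ refill τ v w a c = w := by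
  rw [refill_of_isFree a hc]
  split_ifs <;> simp

theorem isFree_refill_iff (a : Fin r → ℕ) {c : Cell ν} :
    IsFree (refill τ v w a) v w c ↔ IsFree τ v w c := by
  have hvw (d : Cell ν) :
      (refill τ v w a d = v ∨ refill τ v w a d = w) ↔ (τ d = v ∨ τ d = w) := by
    by_cases hd : IsFree τ v w d
    · simp only [refill_eq_or_eq a hd, hd.1]
    · rw [refill_of_not_isFree a hd]
  simp only [IsFree, hvw]

theorem frame_refill (a : Fin r → ℕ) : frame (refill τ v w a) v w = frame τ v w := by
  funext c
  by_cases hc : IsFree τ v w c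
  · simp [frame, isFree_refill_iff, hc]
  · simp [frame, isFree_refill_iff, hc, refill_of_not_isFree]

theorem isFree_iff_of_frame_eq {τ' : Cell ν → Fin r} (h : frame τ' v w = frame τ v w)
    (c : Cell ν) : IsFree τ' v w c ↔ IsFree τ v w c := by
  have hc := congrFun h c
  by_cases h1 : IsFree τ' v w c <;> by_cases h2 : IsFree τ v w c <;> simp_all [frame]

theorem eq_of_frame_eq {τ' : Cell ν → Fin r} (h : frame τ' v w = frame τ v w) {c : Cell ν}
    (hc : ¬ IsFree τ v w c) : τ' c = τ c := by
  simpa [frame, hc, (isFree_iff_of_frame_eq h c).not.2 hc] using congrFun h c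

theorem vCount_mem_countBox (τ' : Cell ν → Fin r) : vCount τ v w τ' ∈ countBox τ v w := by
  simp only [countBox, Fintype.mem_piFinset, mem_range]
  exact fun i => Nat.lt_succ_of_le (card_filter_le _ _)

theorem refill_col_lt (hw : (w : ℕ) = v + 1) (hτ : IsSemistandard τ) (a : Fin r → ℕ)
    (c d : Cell ν) (hcol : c.1.2 = d.1.2)
    (hrow : (c.1.1 : ℕ) < d.1.1) : (refill τ v w a c : ℕ) < refill τ v w a d := by
  have hlt := hτ.col_lt c d hcol hrow
  have hne : d ≠ c := fun h => by rw [h] at hrow; omega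
  by_cases hc : IsFree τ v w c <;> by_cases hd : IsFree τ v w d
  · exact absurd (hc.2 d hcol.symm hd.1) hne
  · have hc' := (eq_or_eq_iff_of_succ hw).1 hc.1
    have hdw : τ d ≠ w := fun hdw => hne (hc.2 d hcol.symm (Or.inr hdw))
    have := (eq_or_eq_iff_of_succ hw).1 (refill_eq_or_eq a hc)
    rw [refill_of_not_isFree a hd]
    omega
  · have hd' := (eq_or_eq_iff_of_succ hw).1 hd.1
    have hcv : τ c ≠ v := fun hcv => hne (hd.2 c hcol (Or.inl hcv)).symm
    have := (eq_or_eq_iff_of_succ hw).1 (refill_eq_or_eq a hd)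
    rw [refill_of_not_isFree a hc]
    omega
  · rwa [refill_of_not_isFree a hc, refill_of_not_isFree a hd]

theorem IsPartner.symm {c d : Cell ν} (h : IsPartner τ v w d c) : IsPartner τ v w c d := by
  obtain ⟨hcol, h | h⟩ := h
  · exact ⟨hcol.symm, Or.inr ⟨h.2.1, h.1, h.2.2⟩⟩
  · exact ⟨hcol.symm, Or.inl ⟨h.2.1, h.1, h.2.2⟩⟩

theorem IsPartner.not_isFree {c d : Cell ν} (h : IsPartner τ v w d c) : ¬ IsFree τ v w c := by
  intro hc
  obtain ⟨hcol, ⟨-, hd, hrow⟩ | ⟨-, hd, hrow⟩⟩ := h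
  · rw [hc.2 d hcol (Or.inr hd)] at hrow
    omega
  · rw [hc.2 d hcol (Or.inl hd)] at hrow
    omega

theorem IsPartner.unique (hw : (w : ℕ) = v + 1) {c d d' : Cell ν} (h : IsPartner τ v w d c)
    (h' : IsPartner τ v w d' c) : d = d' := by
  obtain ⟨hcol, h⟩ := h
  obtain ⟨hcol', h'⟩ := h'
  exact Cell.ext_val (by omega) (hcol.trans hcol'.symm)

theorem IsPartner.cellFactor_swap (hw : (w : ℕ) = v + 1) (x : Fin r → S) (t : ℕ → S)
    {c d : Cell ν} (h : IsPartner τ v w d c) :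
    cellFactor (x ∘ Equiv.swap v w) t (τ c) c = cellFactor x t (τ d) d := by
  obtain ⟨hcol, ⟨hc, hd, hrow⟩ | ⟨hc, hd, hrow⟩⟩ := h
  · simp only [cellFactor, Function.comp_apply, hc, hd, Equiv.swap_apply_left, hcol]
    congr 2
    omega
  · simp only [cellFactor, Function.comp_apply, hc, hd, Equiv.swap_apply_right, hcol]
    congr 2
    omega

theorem isPartner_partner {c : Cell ν} (h : ∃ d, IsPartner τ v w d c) :
    IsPartner τ v w (partner τ v w c) c := by
  rw [partner, dif_pos h]
  exact h.choose_spec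

theorem partner_eq_self {c : Cell ν} (h : ¬ ∃ d, IsPartner τ v w d c) : partner τ v w c = c :=
  dif_neg h

theorem partner_partner (hw : (w : ℕ) = v + 1) (c : Cell ν) :
    partner τ v w (partner τ v w c) = c := by
  by_cases h : ∃ d, IsPartner τ v w d c
  · have hp := isPartner_partner h
    exact (isPartner_partner ⟨c, hp.symm⟩).unique hw hp.symm
  · rw [partner_eq_self h, partner_eq_self h]

theorem not_isFree_partner {c : Cell ν} (hc : ¬ IsFree τ v w c) :
    ¬ IsFree τ v w (partner τ v w c) := by
  by_cases h : ∃ d, IsPartner τ v w d c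
  · exact (isPartner_partner h).symm.not_isFree
  · rwa [partner_eq_self h]

variable (hν : Antitone ν) (hw : (w : ℕ) = v + 1) (hτ : IsSemistandard τ)
include hν hw hτ

theorem exists_partner {c : Cell ν} (hc : ¬ IsFree τ v w c) (hvw : τ c = v ∨ τ c = w) :
    ∃ d, IsPartner τ v w d c := by
  simp only [IsFree, not_and, not_forall] at hc
  obtain ⟨d, hcol, hd, hne⟩ := hc hvw
  have hc' := (eq_or_eq_iff_of_succ hw).1 hvw
  have hd' := (eq_or_eq_iff_of_succ hw).1 hd
  refine ⟨d, hcol, ?_⟩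
  rcases lt_trichotomy (c.1.1 : ℕ) d.1.1 with hlt | heq | hgt
  · have := hτ.row_eq_succ_of_col_eq hν hcol.symm hlt hc'.1 hd'.2
    exact Or.inl ⟨Fin.ext (by omega), Fin.ext (by omega), this.2.2⟩
  · exact absurd (Cell.ext_val heq.symm hcol) hne
  · have := hτ.row_eq_succ_of_col_eq hν hcol hgt hd'.1 hc'.2
    exact Or.inr ⟨Fin.ext (by omega), Fin.ext (by omega), this.2.2⟩

/-- The `w` below `d` forces a `w` directly below `c`. -/
theorem isFree_of_isFree_left {c d : Cell ν} (hc : IsFree τ v w c) (hrow : c.1.1 = d.1.1)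
    (hlt : c.1.2 < d.1.2) (hd : τ d = v) : IsFree τ v w d := by
  by_contra hd'
  obtain ⟨e, hcol, ⟨-, he, hrow'⟩ | ⟨hdw, -, -⟩⟩ :=
    exists_partner hν hw hτ hd' (Or.inl hd)
  · obtain ⟨b, hb_row, hb_col⟩ :=
      e.exists_of_le hν (i := e.1.1) (j := c.1.2) le_rfl (by omega)
    have h1 := hτ.col_lt c b hb_col.symm (by omega)
    have h2 := hτ.row_le b e hb_row (by omega)
    have hc' := (eq_or_eq_iff_of_succ hw).1 hc.1
    have hbc := hc.2 b hb_col (Or.inr (Fin.ext (by omega)))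
    subst hbc
    omega
  · omega

/-- The `v` above `c` forces a `v` directly above `d`. -/
theorem isFree_of_isFree_right {c d : Cell ν} (hd : IsFree τ v w d) (hrow : c.1.1 = d.1.1)
    (hlt : c.1.2 < d.1.2) (hc : τ c = w) : IsFree τ v w c := by
  by_contra hc'
  obtain ⟨e, hcol, ⟨hcv, -, -⟩ | ⟨-, he, hrow'⟩⟩ :=
    exists_partner hν hw hτ hc' (Or.inr hc)
  · omega
  · obtain ⟨u, hu_row, hu_col⟩ := d.exists_of_le hν (i := e.1.1) (by omega) le_rfl
    have h1 := hτ.row_le e u hu_row.symm (by omega)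
    have h2 := hτ.col_lt u d hu_col (by omega)
    have hd' := (eq_or_eq_iff_of_succ hw).1 hd.1
    have hud := hd.2 u hu_col (Or.inl (Fin.ext (by omega)))
    subst hud
    omega

theorem isFree_of_between {c d e : Cell ν} (hc : IsFree τ v w c) (hd : IsFree τ v w d)
    (hce : c.1.1 = e.1.1) (hde : d.1.1 = e.1.1) (h1 : c.1.2 ≤ e.1.2) (h2 : e.1.2 ≤ d.1.2) :
    IsFree τ v w e := by
  have hc' := (eq_or_eq_iff_of_succ hw).1 hc.1
  have hd' := (eq_or_eq_iff_of_succ hw).1 hd.1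
  have hle1 := hτ.row_le c e (by rw [hce]) h1
  have hle2 := hτ.row_le e d (by rw [hde]) h2
  rcases (eq_or_eq_iff_of_succ hw (a := τ e)).2 ⟨by omega, by omega⟩ with he | he
  · rcases h1.lt_or_eq with h1 | h1
    · exact isFree_of_isFree_left hν hw hτ hc hce h1 he
    · rwa [← Cell.ext_val (by rw [hce]) h1]
  · rcases h2.lt_or_eq with h2 | h2
    · exact isFree_of_isFree_right hν hw hτ hd hde.symm h2 he
    · rwa [Cell.ext_val (by rw [hde]) h2]

theorem image_col_freeCells (i : Fin r) :
    (freeCells τ v w i).image (fun c => c.1.2) =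
      Ico (freeStart τ v w i) (freeStart τ v w i + #(freeCells τ v w i)) := by
  rw [freeStart, ← card_image_of_injOn (injOn_col_freeCells i)]
  refine eq_Ico_of_ordConnected (Set.ordConnected_def.2 fun _ hx _ hy j hj => ?_)
  simp only [coe_image, Set.mem_image, mem_coe, mem_freeCells] at hx hy ⊢
  obtain ⟨c, ⟨hc, hci⟩, rfl⟩ := hx
  obtain ⟨d, ⟨hd, hdi⟩, rfl⟩ := hy
  obtain ⟨e, he_row, he_col⟩ := d.exists_of_le hν (i := d.1.1) le_rfl hj.2
  have he : IsFree τ v w e := isFree_of_between hν hw hτ hc hd (Fin.ext (by omega))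
    (Fin.ext (by omega)) (he_col ▸ hj.1) (he_col ▸ hj.2)
  exact ⟨e, ⟨he, Fin.ext (by omega)⟩, he_col⟩

theorem col_mem_Ico_of_mem_freeCells {i : Fin r} {c : Cell ν} (hc : c ∈ freeCells τ v w i) :
    freeStart τ v w i ≤ c.1.2 ∧ c.1.2 < freeStart τ v w i + #(freeCells τ v w i) :=
  mem_Ico.1 (image_col_freeCells hν hw hτ i ▸ mem_image_of_mem _ hc)

theorem card_filter_col_lt_freeCells (i : Fin r) {j : ℕ}
    (hj : j ≤ freeStart τ v w i + #(freeCells τ v w i)) :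
    #((freeCells τ v w i).filter fun c => c.1.2 < j) = j - freeStart τ v w i := by
  rw [← card_image_of_injOn ((injOn_col_freeCells i).mono (coe_subset.2 (filter_subset _ _))),
    ← filter_image (f := fun c : Cell ν => c.1.2) (p := fun k => k < j),
    image_col_freeCells hν hw hτ, ← Nat.card_Ico]
  congr 1
  ext k
  simp only [mem_filter, mem_Ico]
  omega

theorem refill_row_le (a : Fin r → ℕ) (c d : Cell ν) (hrow : (c.1.1 : ℕ) = d.1.1)
    (hcol : c.1.2 ≤ d.1.2) : (refill τ v w a c : ℕ) ≤ refill τ v w a d := by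
  have hle := hτ.row_le c d hrow hcol
  by_cases hc : IsFree τ v w c <;> by_cases hd : IsFree τ v w d
  · rw [refill_of_isFree a hc, refill_of_isFree a hd, Fin.ext hrow]
    split_ifs <;> omega
  · have hc' := (eq_or_eq_iff_of_succ hw).1 hc.1
    have hdv : τ d ≠ v := fun hdv => hd <| by
      rcases hcol.lt_or_eq with hlt | heq
      · exact isFree_of_isFree_left hν hw hτ hc (Fin.ext hrow) hlt hdv
      · rwa [← Cell.ext_val hrow heq]
    have := (eq_or_eq_iff_of_succ hw).1 (refill_eq_or_eq a hc)
    rw [refill_of_not_isFree a hd]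
    omega
  · have hd' := (eq_or_eq_iff_of_succ hw).1 hd.1
    have hcw : τ c ≠ w := fun hcw => hc <| by
      rcases hcol.lt_or_eq with hlt | heq
      · exact isFree_of_isFree_right hν hw hτ hd (Fin.ext hrow) hlt hcw
      · rwa [Cell.ext_val hrow heq]
    have := (eq_or_eq_iff_of_succ hw).1 (refill_eq_or_eq a hd)
    rw [refill_of_not_isFree a hc]
    omega
  · rwa [refill_of_not_isFree a hc, refill_of_not_isFree a hd]

theorem isSemistandard_refill (a : Fin r → ℕ) : IsSemistandard (refill τ v w a) :=
  ⟨refill_row_le hν hw hτ a, refill_col_lt hw hτ a⟩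

theorem col_lt_freeStart_add_vCount {τ' : Cell ν → Fin r} (hτ' : IsSemistandard τ')
    (h : frame τ' v w = frame τ v w) {c : Cell ν} (hc : IsFree τ v w c) (hv : τ' c = v) :
    c.1.2 < freeStart τ v w c.1.1 + vCount τ v w τ' c.1.1 := by
  have hci : c ∈ freeCells τ v w c.1.1 := mem_freeCells.2 ⟨hc, rfl⟩
  have hcV : c ∈ (freeCells τ v w c.1.1).filter fun d => τ' d = v := mem_filter.2 ⟨hci, hv⟩
  have hsub : (freeCells τ v w c.1.1).filter (fun d => d.1.2 < c.1.2) ⊆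
      ((freeCells τ v w c.1.1).filter fun d => τ' d = v).erase c := by
    intro d hd
    obtain ⟨hdF, hlt⟩ := mem_filter.1 hd
    obtain ⟨hdfree, hdi⟩ := mem_freeCells.1 hdF
    have hd' := (eq_or_eq_iff_of_succ hw).1 ((isFree_iff_of_frame_eq h d).2 hdfree).1
    have hle := hτ'.row_le d c (by rw [hdi]) hlt.le
    refine mem_erase.2 ⟨fun hdc => ?_, mem_filter.2 ⟨hdF, Fin.ext ?_⟩⟩
    · rw [hdc] at hlt
      omega
    · omega
  have hcard := card_le_card hsub
  have hpos := card_pos.2 ⟨c, hcV⟩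
  have hcol := col_mem_Ico_of_mem_freeCells hν hw hτ hci
  rw [card_erase_of_mem hcV, card_filter_col_lt_freeCells hν hw hτ _ hcol.2.le] at hcard
  rw [vCount]
  omega

theorem freeStart_add_vCount_le_col {τ' : Cell ν → Fin r} (hτ' : IsSemistandard τ')
    {c : Cell ν} (hc : IsFree τ v w c) (hw' : τ' c = w) :
    freeStart τ v w c.1.1 + vCount τ v w τ' c.1.1 ≤ c.1.2 := by
  have hci : c ∈ freeCells τ v w c.1.1 := mem_freeCells.2 ⟨hc, rfl⟩
  have hsub : ((freeCells τ v w c.1.1).filter fun d => τ' d = v) ⊆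
      (freeCells τ v w c.1.1).filter (fun d => d.1.2 < c.1.2) := by
    intro d hd
    obtain ⟨hdF, hdv⟩ := mem_filter.1 hd
    refine mem_filter.2 ⟨hdF, not_le.1 fun hle => ?_⟩
    have := hτ'.row_le c d (by rw [(mem_freeCells.1 hdF).2]) hle
    rw [hdv, hw'] at this
    omega
  have hcard := card_le_card hsub
  have hcol := col_mem_Ico_of_mem_freeCells hν hw hτ hci
  rw [card_filter_col_lt_freeCells hν hw hτ _ hcol.2.le] at hcard
  rw [vCount]
  omega

theorem eq_refill_vCount {τ' : Cell ν → Fin r} (hτ' : IsSemistandard τ')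
    (h : frame τ' v w = frame τ v w) : τ' = refill τ v w (vCount τ v w τ') := by
  funext c
  by_cases hc : IsFree τ v w c
  · rw [refill_of_isFree _ hc]
    rcases ((isFree_iff_of_frame_eq h c).2 hc).1 with hv | hw'
    · rw [if_pos (col_lt_freeStart_add_vCount hν hw hτ hτ' h hc hv), hv]
    · rw [if_neg (not_lt.2 (freeStart_add_vCount_le_col hν hw hτ hτ' hc hw')), hw']
  · rw [refill_of_not_isFree _ hc, eq_of_frame_eq h hc]

theorem vCount_refill {a : Fin r → ℕ} (ha : a ∈ countBox τ v w) :
    vCount τ v w (refill τ v w a) = a := by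
  funext i
  have hai : a i ≤ #(freeCells τ v w i) := by
    simp only [countBox, Fintype.mem_piFinset, mem_range] at ha
    exact Nat.lt_succ_iff.1 (ha i)
  have hfilter : (freeCells τ v w i).filter (fun c => refill τ v w a c = v) =
      (freeCells τ v w i).filter (fun c => c.1.2 < freeStart τ v w i + a i) := by
    refine filter_congr fun c hc => ?_
    obtain ⟨hcF, rfl⟩ := mem_freeCells.1 hc
    rw [refill_of_isFree a hcF]
    split_ifs with hlt
    · simpa using hlt
    · simp only [hlt, iff_false, Fin.ext_iff]
      omega
  rw [vCount, hfilter, card_filter_col_lt_freeCells hν hw hτ i (by omega)]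
  omega

theorem injOn_refill : Set.InjOn (refill τ v w) (countBox τ v w) := fun a ha b hb h => by
  rw [← vCount_refill hν hw hτ ha, ← vCount_refill hν hw hτ hb, h]

theorem filter_frame_eq_image_refill :
    (SSTFinset ν r).filter (fun τ' => frame τ' v w = frame τ v w) =
      (countBox τ v w).image (refill τ v w) := by
  ext τ'
  simp only [mem_filter, mem_image, mem_SSTFinset]
  constructor
  · rintro ⟨hτ', h⟩
    exact ⟨vCount τ v w τ', vCount_mem_countBox τ',
      (eq_refill_vCount hν hw hτ hτ' h).symm⟩
  · rintro ⟨a, -, rfl⟩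
    exact ⟨isSemistandard_refill hν hw hτ a, frame_refill a⟩

theorem cellFactor_swap_partner (x : Fin r → S) (t : ℕ → S) {c : Cell ν}
    (hc : ¬ IsFree τ v w c) :
    cellFactor (x ∘ Equiv.swap v w) t (τ c) c =
      cellFactor x t (τ (partner τ v w c)) (partner τ v w c) := by
  by_cases h : ∃ d, IsPartner τ v w d c
  · exact (isPartner_partner h).cellFactor_swap hw x t
  · have hvw : τ c ≠ v ∧ τ c ≠ w := by
      by_contra hvw
      exact h (exists_partner hν hw hτ hc (by tauto))
    rw [partner_eq_self h, cellFactor, cellFactor, Function.comp_apply,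
      Equiv.swap_apply_of_ne_of_ne hvw.1 hvw.2]

theorem prod_not_isFree_cellFactor_swap (x : Fin r → S) (t : ℕ → S) :
    ∏ c ∈ univ.filter (¬ IsFree τ v w ·), cellFactor (x ∘ Equiv.swap v w) t (τ c) c =
      ∏ c ∈ univ.filter (¬ IsFree τ v w ·), cellFactor x t (τ c) c := by
  refine prod_nbij' (partner τ v w) (partner τ v w) ?_ ?_ ?_ ?_ ?_
  · exact fun c hc => mem_filter.2 ⟨mem_univ _, not_isFree_partner (mem_filter.1 hc).2⟩
  · exact fun c hc => mem_filter.2 ⟨mem_univ _, not_isFree_partner (mem_filter.1 hc).2⟩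
  · exact fun c _ => partner_partner hw c
  · exact fun c _ => partner_partner hw c
  · exact fun c hc => cellFactor_swap_partner hν hw hτ x t (mem_filter.1 hc).2

theorem prod_freeCells_cellFactor_refill (x : Fin r → S) (t : ℕ → S) (a : Fin r → ℕ)
    (i : Fin r) :
    ∏ c ∈ freeCells τ v w i, cellFactor x t (refill τ v w a c) c =
      ∏ k ∈ range #(freeCells τ v w i), if k < a i
        then x v - t (v + (freeStart τ v w i + k) - i)
        else x w - t (v + (freeStart τ v w i + (k + 1)) - i) := by
  have hcell : ∀ c ∈ freeCells τ v w i, cellFactor x t (refill τ v w a c) c =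
      if c.1.2 < freeStart τ v w i + a i then x v - t (v + c.1.2 - i)
        else x w - t (v + (c.1.2 + 1) - i) := by
    intro c hc
    obtain ⟨hcF, rfl⟩ := mem_freeCells.1 hc
    rw [refill_of_isFree a hcF, cellFactor]
    split_ifs
    · rfl
    · congr 2
      omega
  rw [prod_congr rfl hcell, ← prod_image (g := fun c : Cell ν => c.1.2)
      (f := fun j => if j < freeStart τ v w i + a i then x v - t (v + j - i)
        else x w - t (v + (j + 1) - i)) (injOn_col_freeCells i),
    image_col_freeCells hν hw hτ i, prod_Ico_eq_prod_range, Nat.add_sub_cancel_left]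
  refine prod_congr rfl fun k _ => ?_
  simp only [add_lt_add_iff_left, add_assoc]

theorem sum_countBox_tabWeight_refill (x : Fin r → S) (t : ℕ → S) :
    ∑ a ∈ countBox τ v w, tabWeight x t (refill τ v w a) =
      (∏ c ∈ univ.filter (¬ IsFree τ v w ·), cellFactor x t (τ c) c) *
        ∏ i, prodDivDiff (fun k => t (v + (freeStart τ v w i + k) - i))
          #(freeCells τ v w i) (x v) (x w) := by
  have hsplit : ∀ a, tabWeight x t (refill τ v w a) =
      (∏ c ∈ univ.filter (¬ IsFree τ v w ·), cellFactor x t (τ c) c) *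
        ∏ i, ∏ c ∈ freeCells τ v w i, cellFactor x t (refill τ v w a c) c := by
    intro a
    rw [tabWeight, ← prod_filter_mul_prod_filter_not univ (IsFree τ v w), mul_comm]
    congr 1
    · exact prod_congr rfl fun c hc => by rw [refill_of_not_isFree a (mem_filter.1 hc).2]
    · rw [← prod_fiberwise_of_maps_to (g := fun c : Cell ν => c.1.1) (t := univ)
        (fun _ _ => mem_univ _)]
      simp only [filter_filter, freeCells]
  simp_rw [hsplit, prod_freeCells_cellFactor_refill hν hw hτ, ← mul_sum]
  congr 1
  simp only [prodDivDiff]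
  rw [prod_univ_sum]
  rfl

theorem sum_countBox_tabWeight_refill_swap [IsDomain S] {x : Fin r → S} (hx : x v ≠ x w)
    (t : ℕ → S) :
    ∑ a ∈ countBox τ v w, tabWeight (x ∘ Equiv.swap v w) t (refill τ v w a) =
      ∑ a ∈ countBox τ v w, tabWeight x t (refill τ v w a) := by
  rw [sum_countBox_tabWeight_refill hν hw hτ, sum_countBox_tabWeight_refill hν hw hτ,
    prod_not_isFree_cellFactor_swap hν hw hτ]
  congr 1
  refine prod_congr rfl fun i _ => ?_
  simp only [Function.comp_apply, Equiv.swap_apply_left, Equiv.swap_apply_right]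
  exact prodDivDiff_comm _ _ hx.symm

end BenderKnuth

theorem sum_tabWeight_comp_swap [IsDomain S] (hν : Antitone ν) {v w : Fin r}
    (hw : (w : ℕ) = v + 1) {x : Fin r → S} (hx : x v ≠ x w) (t : ℕ → S) :
    ∑ τ ∈ SSTFinset ν r, tabWeight (x ∘ Equiv.swap v w) t τ =
      ∑ τ ∈ SSTFinset ν r, tabWeight x t τ := by
  have hframe : ∀ τ ∈ SSTFinset ν r, frame τ v w ∈ (SSTFinset ν r).image (frame · v w) :=
    fun τ hτ => mem_image_of_mem _ hτ
  rw [← sum_fiberwise_of_maps_to hframe, ← sum_fiberwise_of_maps_to hframe]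
  refine sum_congr rfl fun φ hφ => ?_
  obtain ⟨τ, hτ, rfl⟩ := mem_image.1 hφ
  have hτ := mem_SSTFinset.1 hτ
  rw [filter_frame_eq_image_refill hν hw hτ, sum_image (injOn_refill hν hw hτ),
    sum_image (injOn_refill hν hw hτ)]
  exact sum_countBox_tabWeight_refill_swap hν hw hτ hx t

theorem rename_swap_factSchur (hν : Antitone ν) {v w : Fin r} (hw : (w : ℕ) = v + 1) :
    rename (Equiv.swap v w) (factSchur ν r) = factSchur ν r := by
  have hvw : v ≠ w := fun h => by rw [h] at hw; omega
  have h := sum_tabWeight_comp_swap hν hw ((X_injective (R := MvPolynomial ℕ ℤ)).ne hvw)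
    (fun k => C (X k))
  simpa [factSchur, tabWeight, cellFactor, map_sum, map_prod] using h

end FactorialSchur

theorem stmt8_general (r : ℕ) (ν : Fin r → ℕ) (hν : Antitone ν) (σ : Equiv.Perm (Fin r)) :
    MvPolynomial.rename (⇑σ) (factSchur ν r) = factSchur ν r :=
  MvPolynomial.isSymmetric_of_rename_swap_succ
    (fun _ _ hw => FactorialSchur.rename_swap_factSchur hν hw) σ

/-- For a partition `ν` with at most `r` parts and `ν_1 ≤ n - r`, the factorial Schur
polynomial is symmetric in the variables `u_1, ..., u_r`. -/
theorem stmt8 (r n : ℕ) (ν : Fin r → ℕ) (hν : Antitone ν) (hb : ∀ i, ν i ≤ n - r)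
    (σ : Equiv.Perm (Fin r)) :
    MvPolynomial.rename (⇑σ) (factSchur ν r) = factSchur ν r :=
  stmt8_general r ν hν σ
end
end

section
/- The set of Schur polynomials s_λ(u_1,...,u_r), as λ ranges over all partitions with at most r parts, forms a ℤ-module basis of the ring ℤ[u_1,...,u_r]^{S_r} of symmetric polynomials in r variables. -/
/-!
The Schur polynomial `s_λ` is symmetric: for adjacent letters `a` and `b = a + 1`, the
Bender–Knuth involution of semistandard tableaux exchanges the numbers of `a`s and `b`s, so
`s_λ` is invariant under the adjacent transpositions, which generate `S_r`.

A symmetric polynomial is determined by its coefficients at antitone exponents, and the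
coefficient of `u^μ` in `s_λ` counts the tableaux of shape `λ` and weight `μ`. There is exactly
one of weight `λ` (row `i` filled with `i`), and every weight is dominated by `λ` because the
entries of row `i` are at least `i`. Dominance strictly increases `∑ₖ (μ₁ + ⋯ + μₖ)`, so
the Schur polynomials are unitriangular against the coefficient functionals, hence a basis
over `ℤ`.
-/

open Finset MvPolynomial

noncomputable section

/-- The `R`-submodule of `MvPolynomial (Fin r) R` consisting of the symmetric polynomials
(those invariant under every permutation of the variables). -/
def symmSubmodule (r : ℕ) (R : Type*) [CommSemiring R] :
    Submodule R (MvPolynomial (Fin r) R) where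
  carrier := {P | P.IsSymmetric}
  add_mem' := fun {P Q} hP hQ e => by rw [map_add, hP e, hQ e]
  zero_mem' := fun e => map_zero _
  smul_mem' := fun c P hP e => by
    rw [MvPolynomial.smul_eq_C_mul, map_mul, MvPolynomial.rename_C, hP e,
      ← MvPolynomial.smul_eq_C_mul]

lemma MvPolynomial.IsSymmetric.ext_antitone {R : Type*} [CommSemiring R] {n : ℕ}
    {P Q : MvPolynomial (Fin n) R} (hP : P.IsSymmetric) (hQ : Q.IsSymmetric)
    (h : ∀ ν : Fin n → ℕ, Antitone ν →
      coeff (Finsupp.equivFunOnFinite.symm ν) P = coeff (Finsupp.equivFunOnFinite.symm ν) Q) :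
    P = Q := by
  ext d
  let σ : Equiv.Perm (Fin n) := Fin.revPerm.trans (Tuple.sort d)
  have hanti : Antitone (d ∘ σ) := fun x y hxy => Tuple.monotone_sort d (Fin.rev_le_rev.2 hxy)
  have hd : Finsupp.mapDomain σ (Finsupp.equivFunOnFinite.symm (d ∘ σ)) = d := by
    ext v
    simp [Finsupp.mapDomain_equiv_apply]
  rw [← hd, ← hP σ, ← hQ σ, coeff_rename_mapDomain σ σ.injective,
    coeff_rename_mapDomain σ σ.injective, h _ hanti]

section Unitriangular

variable {ι R : Type*} [Ring R] {K : ι → ι →₀ R} {m : ι → ℕ}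

lemma linearIndependent_of_unitriangular (hdiag : ∀ ν, K ν ν = 1)
    (htri : ∀ ν μ, K ν μ ≠ 0 → μ = ν ∨ m μ < m ν) : LinearIndependent R K := by
  rw [linearIndependent_iff]
  intro l hl
  by_contra hne
  obtain ⟨ν₀, hν₀, hmax⟩ :=
    Finset.exists_max_image l.support m (Finsupp.support_nonempty_iff.2 hne)
  have h0 := DFunLike.congr_fun hl ν₀
  rw [Finsupp.linearCombination_apply, Finsupp.sum, Finsupp.finsetSum_apply,
    Finset.sum_eq_single ν₀ (fun ν hν hne' => ?_) (fun h => absurd hν₀ h)] at h0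
  · simp only [Finsupp.smul_apply, hdiag, smul_eq_mul, mul_one, Finsupp.coe_zero,
      Pi.zero_apply] at h0
    exact Finsupp.mem_support_iff.1 hν₀ h0
  · rcases eq_or_ne (K ν ν₀) 0 with h | h
    · simp [h]
    · rcases htri ν ν₀ h with rfl | hlt
      · exact absurd rfl hne'
      · exact absurd (hmax ν hν) (not_le.2 hlt)

lemma span_eq_top_of_unitriangular (hdiag : ∀ ν, K ν ν = 1)
    (htri : ∀ ν μ, K ν μ ≠ 0 → μ = ν ∨ m μ < m ν) : Submodule.span R (Set.range K) = ⊤ := by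
  classical
  nontriviality R
  have hsingle : ∀ n μ, m μ = n →
      Finsupp.single μ (1 : R) ∈ Submodule.span R (Set.range K) := by
    intro n
    induction n using Nat.strong_induction_on with
    | _ n ih =>
      intro μ hμ
      have hsupp : μ ∈ (K μ).support := Finsupp.mem_support_iff.2 (by simp [hdiag])
      have hK : K μ = Finsupp.single μ 1 +
          ∑ ν ∈ (K μ).support.erase μ, K μ ν • Finsupp.single ν (1 : R) := by
        conv_lhs =>
          rw [← Finsupp.sum_single (K μ), Finsupp.sum, ← Finset.add_sum_erase _ _ hsupp]
        simp [hdiag]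
      rw [eq_sub_of_add_eq hK.symm]
      refine Submodule.sub_mem _ (Submodule.subset_span ⟨μ, rfl⟩)
        (Submodule.sum_mem _ fun ν hν => Submodule.smul_mem _ _ ?_)
      rcases htri μ ν (Finsupp.mem_support_iff.1 (Finset.mem_of_mem_erase hν)) with h | h
      · exact absurd h (Finset.ne_of_mem_erase hν)
      · exact ih _ (hμ ▸ h) ν rfl
  rw [eq_top_iff, ← (Finsupp.basisSingleOne (R := R) (ι := ι)).span_eq]
  exact Submodule.span_le.2 (Set.range_subset_iff.2 fun μ => hsingle _ μ rfl)

lemma exists_basis_of_unitriangular {M : Type*} [AddCommGroup M] [Module R M]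
    (Φ : M →ₗ[R] ι →₀ R) (hΦ : Function.Injective Φ) (g : ι → M)
    (hdiag : ∀ ν, Φ (g ν) ν = 1) (htri : ∀ ν μ, Φ (g ν) μ ≠ 0 → μ = ν ∨ m μ < m ν) :
    ∃ b : Module.Basis ι R M, ⇑b = g := by
  have hli : LinearIndependent R g :=
    (linearIndependent_of_unitriangular (K := Φ ∘ g) hdiag htri).of_comp Φ
  have hspan : ⊤ ≤ Submodule.span R (Set.range g) := fun x _ => by
    have : Φ x ∈ (Submodule.span R (Set.range g)).map Φ := by
      rw [Submodule.map_span, ← Set.range_comp,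
        span_eq_top_of_unitriangular (K := Φ ∘ g) hdiag htri]
      trivial
    obtain ⟨y, hy, hxy⟩ := this
    exact hΦ hxy ▸ hy
  exact ⟨Module.Basis.mk hli hspan, Module.Basis.coe_mk hli hspan⟩

end Unitriangular

lemma MvPolynomial.isSymmetric_of_rename_swap {R : Type*} [CommSemiring R] {n : ℕ}
    {P : MvPolynomial (Fin n) R}
    (h : ∀ i j : Fin n, (i : ℕ) + 1 = j → rename (Equiv.swap i j) P = P) : P.IsSymmetric := by
  cases n with
  | zero =>
    intro σ
    rw [Subsingleton.elim σ 1, Equiv.Perm.coe_one, rename_id, AlgHom.id_apply]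
  | succ n =>
    intro σ
    have hσ := (Equiv.Perm.mclosure_swap_castSucc_succ n).symm ▸ Submonoid.mem_top σ
    induction hσ using Submonoid.closure_induction with
    | mem _ hσ =>
      obtain ⟨i, rfl⟩ := hσ
      exact h _ _ (by simp)
    | one => rw [Equiv.Perm.coe_one, rename_id, AlgHom.id_apply]
    | mul σ₁ σ₂ _ _ h₁ h₂ => rw [Equiv.Perm.coe_mul, ← rename_rename, h₂, h₁]

section Rank

variable {α β : Type*} [LinearOrder β] {s : Finset α} {f : α → β}

/-- The rank `#{y ∈ s | f y < f x}` takes each value below `#s` exactly once on `s`. -/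
lemma card_filter_card_filter_lt_lt (hf : Set.InjOn f s) {k : ℕ} (hk : k ≤ #s) :
    #{x ∈ s | #{y ∈ s | f y < f x} < k} = k := by
  set rank : α → ℕ := fun x => #{y ∈ s | f y < f x}
  have hmono : ∀ x ∈ s, ∀ y ∈ s, f x < f y → rank x < rank y := fun x hx y hy hxy =>
    Finset.card_lt_card (Finset.ssubset_iff_of_subset (fun z hz => by
      simp only [Finset.mem_filter] at hz ⊢
      exact ⟨hz.1, hz.2.trans hxy⟩) |>.2 ⟨x, by simp [hx, hxy], by simp⟩)
  have hinj : Set.InjOn rank s := fun x hx y hy hxy => by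
    rcases lt_trichotomy (f x) (f y) with h | h | h
    · exact absurd hxy (hmono x hx y hy h).ne
    · exact hf hx hy h
    · exact absurd hxy (hmono y hy x hx h).ne'
  have himage : s.image rank = range #s := by
    refine Finset.eq_of_subset_of_card_le (fun j hj => ?_)
      (by simp [Finset.card_image_of_injOn hinj])
    obtain ⟨x, hx, rfl⟩ := Finset.mem_image.1 hj
    exact Finset.mem_range.2 (Finset.card_lt_card
      (Finset.filter_ssubset.2 ⟨x, hx, lt_irrefl _⟩))
  change #{x ∈ s | rank x < k} = k
  rw [← Finset.card_image_of_injOn (hinj.mono (Finset.filter_subset _ s)),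
    ← Finset.filter_image (p := (· < k)), himage,
    show {j ∈ range #s | j < k} = range k by ext; simp; omega, Finset.card_range]

lemma card_filter_lt_lt_card_filter_iff (hf : Set.InjOn f s) {P : α → Prop} [DecidablePred P]
    (hP : ∀ x ∈ s, ∀ y ∈ s, f y < f x → P x → P y) {x : α} (hx : x ∈ s) :
    #{y ∈ s | f y < f x} < #{y ∈ s | P y} ↔ P x := by
  refine ⟨fun hlt => ?_, fun hPx => Finset.card_lt_card ?_⟩
  · by_contra hPx
    refine hlt.not_ge (Finset.card_le_card fun y hy => ?_)
    obtain ⟨hys, hPy⟩ := Finset.mem_filter.1 hy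
    refine Finset.mem_filter.2 ⟨hys, ?_⟩
    rcases lt_trichotomy (f y) (f x) with h | h | h
    · exact h
    · exact absurd (hf hys hx h ▸ hPy) hPx
    · exact absurd (hP y hys x hx h hPy) hPx
  · refine Finset.ssubset_iff_of_subset (fun y hy => ?_) |>.2 ⟨x, by simp [hx, hPx], by simp⟩
    obtain ⟨hys, hyx⟩ := Finset.mem_filter.1 hy
    exact Finset.mem_filter.2 ⟨hys, hP x hx y hys hyx hPx⟩

end Rank

namespace Schur

open scoped Classical

variable {r : ℕ}

abbrev Cell (ν : Fin r → ℕ) := {x // x ∈ cellsOf ν}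

section Tableaux

variable {ν : Fin r → ℕ}

lemma Cell.col_lt (c : Cell ν) : c.1.2 < ν c.1.1 :=
  Finset.mem_range.1 (Finset.mem_sigma.1 c.2).2

def mkCell (ν : Fin r → ℕ) (i : Fin r) (j : ℕ) (h : j < ν i) : Cell ν :=
  ⟨⟨i, j⟩, by simp [cellsOf, h]⟩

lemma Cell.ext {c d : Cell ν} (hrow : c.1.1 = d.1.1) (hcol : c.1.2 = d.1.2) : c = d :=
  Subtype.ext (Sigma.ext hrow (heq_of_eq hcol))

variable {τ : Cell ν → Fin r}

lemma le_of_sameRow (hτ : τ ∈ SSTFinset ν r) {c d : Cell ν} (hrow : c.1.1 = d.1.1)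
    (hcol : c.1.2 ≤ d.1.2) : τ c ≤ τ d :=
  (Finset.mem_filter.1 hτ).2.1 c d hrow hcol

lemma lt_of_sameCol (hτ : τ ∈ SSTFinset ν r) {c d : Cell ν} (hcol : c.1.2 = d.1.2)
    (hrow : c.1.1 < d.1.1) : τ c < τ d :=
  (Finset.mem_filter.1 hτ).2.2 c d hcol hrow

lemma mem_SSTFinset_of_lt_below (hν : Antitone ν)
    (hrow : ∀ c d : Cell ν, c.1.1 = d.1.1 → c.1.2 ≤ d.1.2 → τ c ≤ τ d)
    (hcol : ∀ c d : Cell ν, c.1.2 = d.1.2 → (d.1.1 : ℕ) = c.1.1 + 1 → τ c < τ d) :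
    τ ∈ SSTFinset ν r := by
  refine Finset.mem_filter.2 ⟨Finset.mem_univ _, hrow, ?_⟩
  suffices key : ∀ n, ∀ c d : Cell ν, c.1.2 = d.1.2 → (d.1.1 : ℕ) = c.1.1 + n + 1 →
      τ c < τ d from fun c d hcd hrow => key (d.1.1 - c.1.1 - 1) c d hcd (by omega)
  intro n
  induction n with
  | zero => exact hcol
  | succ n ih =>
    intro c d hcd hrow
    let i : Fin r := ⟨c.1.1 + n + 1, by omega⟩
    have hi : c.1.2 < ν i := hcd ▸ d.col_lt.trans_le (hν (Fin.le_def.2 (by simp [i]; omega)))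
    exact (ih c (mkCell ν i c.1.2 hi) rfl rfl).trans
      (hcol _ d hcd (by simp [mkCell, i]; omega))

lemma row_le_entry (hν : Antitone ν) (hτ : τ ∈ SSTFinset ν r) (c : Cell ν) :
    (c.1.1 : ℕ) ≤ τ c := by
  suffices key : ∀ n, ∀ c : Cell ν, (c.1.1 : ℕ) = n → n ≤ τ c from key _ c rfl
  intro n
  induction n with
  | zero => intros; omega
  | succ n ih =>
    intro c hc
    let i : Fin r := ⟨n, by omega⟩
    have hi : c.1.2 < ν i := c.col_lt.trans_le (hν (Fin.le_def.2 (by simp [i]; omega)))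
    have hlt := lt_of_sameCol hτ (d := c) (c := mkCell ν i c.1.2 hi) rfl
      (Fin.lt_def.2 (by simp [mkCell, i]; omega))
    have := ih (mkCell ν i c.1.2 hi) rfl
    omega

end Tableaux

section Weight

variable {ν : Fin r → ℕ}

def weight (τ : Cell ν → Fin r) : Fin r →₀ ℕ :=
  ∑ c, Finsupp.single (τ c) 1

lemma weight_apply (τ : Cell ν → Fin r) (v : Fin r) : weight τ v = #{c | τ c = v} := by
  simp [weight, Finsupp.finsetSum_apply, Finsupp.single_apply, Finset.sum_boole]

lemma prod_X_eq_monomial_weight {R : Type*} [CommSemiring R] (τ : Cell ν → Fin r) :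
    ∏ c, (X (τ c) : MvPolynomial (Fin r) R) = monomial (weight τ) 1 :=
  (monomial_sum_one _ _).symm

lemma coeff_schurP {R : Type*} [CommSemiring R] (d : Fin r →₀ ℕ) :
    coeff d (schurP ν r R) = #{τ ∈ SSTFinset ν r | weight τ = d} := by
  simp only [schurP, coeff_sum, prod_X_eq_monomial_weight, coeff_monomial, Finset.sum_boole]

end Weight

section Dominance

def partialSum (f : Fin r → ℕ) (k : ℕ) : ℕ :=
  ∑ i ∈ univ.filter fun i : Fin r => (i : ℕ) < k, f i

lemma partialSum_succ (f : Fin r → ℕ) {k : ℕ} (hk : k < r) :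
    partialSum f (k + 1) = partialSum f k + f ⟨k, hk⟩ := by
  have : univ.filter (fun i : Fin r => (i : ℕ) < k + 1) =
      insert ⟨k, hk⟩ (univ.filter fun i : Fin r => (i : ℕ) < k) := by
    ext i
    simp [Fin.ext_iff]
    omega
  rw [partialSum, partialSum, this, Finset.sum_insert (by simp), add_comm]

lemma exists_partialSum_ne {f g : Fin r → ℕ} (hne : f ≠ g) :
    ∃ k ≤ r, partialSum f k ≠ partialSum g k := by
  obtain ⟨i, hi⟩ := Function.ne_iff.1 hne
  by_contra! h
  have hsucc := partialSum_succ f i.2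
  rw [h _ i.2, h _ i.2.le, partialSum_succ g i.2] at hsucc
  exact hi (by simpa using hsucc.symm)

/-- A statistic that is strictly monotone for the dominance order. -/
def sumPartialSums (f : Fin r → ℕ) : ℕ :=
  ∑ k ∈ range (r + 1), partialSum f k

lemma sumPartialSums_lt {f g : Fin r → ℕ} (hle : ∀ k, partialSum f k ≤ partialSum g k)
    (hne : f ≠ g) : sumPartialSums f < sumPartialSums g := by
  obtain ⟨k, hk, hfg⟩ := exists_partialSum_ne hne
  exact Finset.sum_lt_sum (fun k _ => hle k)
    ⟨k, Finset.mem_range.2 (Nat.lt_succ_of_le hk), lt_of_le_of_ne (hle k) hfg⟩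

lemma card_filter_lt_eq_partialSum {α : Type*} [Fintype α] (g : α → Fin r) (k : ℕ) :
    #{x | (g x : ℕ) < k} = partialSum (fun i => #{x | g x = i}) k := by
  rw [partialSum, Finset.card_eq_sum_card_fiberwise (f := g) (t := {i | (i : ℕ) < k})
    (fun x hx => by simpa using hx)]
  refine Finset.sum_congr rfl fun i hi => congrArg Finset.card ?_
  ext x
  simp only [Finset.mem_filter, Finset.mem_univ, true_and] at hi ⊢
  exact ⟨And.right, fun h => ⟨h ▸ hi, h⟩⟩

variable {ν : Fin r → ℕ} {τ : Cell ν → Fin r}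

lemma card_row (ν : Fin r → ℕ) (i : Fin r) : #{c : Cell ν | c.1.1 = i} = ν i := by
  rw [← Finset.card_range (ν i)]
  refine Finset.card_bij (fun c _ => c.1.2) (fun c hc => ?_) (fun c hc d hd hcd => ?_) ?_
  · simpa [(Finset.mem_filter.1 hc).2] using c.col_lt
  · simp only [Finset.mem_filter, Finset.mem_univ, true_and] at hc hd
    exact Cell.ext (hc.trans hd.symm) hcd
  · exact fun j hj => ⟨mkCell ν i j (Finset.mem_range.1 hj), by simp [mkCell], rfl⟩

lemma card_filter_row_lt (ν : Fin r → ℕ) (k : ℕ) :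
    #{c : Cell ν | (c.1.1 : ℕ) < k} = partialSum ν k := by
  simp only [card_filter_lt_eq_partialSum (fun c : Cell ν => c.1.1), card_row]

lemma card_filter_entry_lt (τ : Cell ν → Fin r) (k : ℕ) :
    #{c | (τ c : ℕ) < k} = partialSum (weight τ) k := by
  rw [card_filter_lt_eq_partialSum τ]
  congr
  funext i
  rw [weight_apply]

lemma partialSum_weight_le (hν : Antitone ν) (hτ : τ ∈ SSTFinset ν r) (k : ℕ) :
    partialSum (weight τ) k ≤ partialSum ν k := by
  rw [← card_filter_entry_lt, ← card_filter_row_lt]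
  exact Finset.card_le_card fun c hc => by
    simp only [Finset.mem_filter, Finset.mem_univ, true_and] at hc ⊢
    exact (row_le_entry hν hτ c).trans_lt hc

def rowTableau (ν : Fin r → ℕ) : Cell ν → Fin r := fun c => c.1.1

lemma rowTableau_mem : rowTableau ν ∈ SSTFinset ν r :=
  Finset.mem_filter.2 ⟨Finset.mem_univ _, fun _ _ h _ => h.le, fun _ _ _ h => h⟩

lemma weight_rowTableau : weight (rowTableau ν) = Finsupp.equivFunOnFinite.symm ν := by
  ext i
  rw [weight_apply]
  exact card_row ν i

lemma eq_rowTableau_of_weight (hν : Antitone ν) (hτ : τ ∈ SSTFinset ν r)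
    (hw : ⇑(weight τ) = ν) : τ = rowTableau ν := by
  funext c
  let k := (c.1.1 : ℕ) + 1
  have hsub : univ.filter (fun d : Cell ν => (τ d : ℕ) < k) ⊆
      univ.filter fun d : Cell ν => (d.1.1 : ℕ) < k := fun d hd =>
    Finset.mem_filter.2 ⟨Finset.mem_univ _,
      (row_le_entry hν hτ d).trans_lt (Finset.mem_filter.1 hd).2⟩
  have heq := Finset.eq_of_subset_of_card_le hsub
    (by rw [card_filter_row_lt, card_filter_entry_lt, hw])
  have hc : c ∈ univ.filter fun d : Cell ν => (d.1.1 : ℕ) < k := by simp [k]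
  rw [← heq, Finset.mem_filter] at hc
  have := row_le_entry hν hτ c
  exact Fin.ext (by simp only [rowTableau]; omega)

end Dominance

abbrev Shape (r : ℕ) := {ν : Fin r → ℕ // Antitone ν}

section Triangularity

variable {R : Type*} [CommSemiring R]

lemma coeff_schurP_self {ν : Fin r → ℕ} (hν : Antitone ν) :
    coeff (Finsupp.equivFunOnFinite.symm ν) (schurP ν r R) = 1 := by
  have : {τ ∈ SSTFinset ν r | weight τ = Finsupp.equivFunOnFinite.symm ν} =
      {rowTableau ν} := by
    ext τ
    simp only [Finset.mem_filter, Finset.mem_singleton]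
    refine ⟨fun ⟨hτ, hw⟩ => eq_rowTableau_of_weight hν hτ (by rw [hw]; rfl), ?_⟩
    rintro rfl
    exact ⟨rowTableau_mem, weight_rowTableau⟩
  rw [coeff_schurP, this, Finset.card_singleton, Nat.cast_one]

lemma eq_or_sumPartialSums_lt_of_coeff_schurP_ne_zero {μ ν : Shape r}
    (h : coeff (Finsupp.equivFunOnFinite.symm μ.1) (schurP ν.1 r R) ≠ 0) :
    μ = ν ∨ sumPartialSums μ.1 < sumPartialSums ν.1 := by
  rw [coeff_schurP] at h
  obtain ⟨τ, hτ⟩ := Finset.card_ne_zero.1 fun h0 => h (by rw [h0, Nat.cast_zero])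
  obtain ⟨hτ, hw⟩ := Finset.mem_filter.1 hτ
  rcases eq_or_ne μ ν with rfl | hne
  · exact Or.inl rfl
  · refine Or.inr (sumPartialSums_lt (fun k => ?_) (Subtype.coe_ne_coe.2 hne))
    simpa [hw] using partialSum_weight_le ν.2 hτ k

end Triangularity

section CoeffMap

variable {R : Type*} [CommSemiring R]

lemma injective_equivFunOnFinite_symm_val :
    Function.Injective fun μ : Shape r => Finsupp.equivFunOnFinite.symm μ.1 :=
  Finsupp.equivFunOnFinite.symm.injective.comp Subtype.val_injective

def antitoneCoeff : symmSubmodule r R →ₗ[R] (Shape r →₀ R) where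
  toFun P := Finsupp.onFinset
    ((P : MvPolynomial (Fin r) R).support.preimage _ injective_equivFunOnFinite_symm_val.injOn)
    (fun μ => coeff (Finsupp.equivFunOnFinite.symm μ.1) (P : MvPolynomial (Fin r) R))
    (fun _ h => Finset.mem_preimage.2 (mem_support_iff.2 h))
  map_add' P Q := by
    ext μ
    simp
  map_smul' c P := by
    ext μ
    simp

lemma antitoneCoeff_injective : Function.Injective (antitoneCoeff (r := r) (R := R)) :=
  fun P Q h => Subtype.ext (P.2.ext_antitone Q.2 fun ν hν => DFunLike.congr_fun h ⟨ν, hν⟩)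

end CoeffMap

section BenderKnuth

variable {ν : Fin r → ℕ} {a b v : Fin r} {τ : Cell ν → Fin r} {c d : Cell ν}

def HasBelow (v : Fin r) (τ : Cell ν → Fin r) (c : Cell ν) : Prop :=
  ∃ d : Cell ν, (d.1.1 : ℕ) = c.1.1 + 1 ∧ d.1.2 = c.1.2 ∧ τ d = v

def HasAbove (v : Fin r) (τ : Cell ν → Fin r) (c : Cell ν) : Prop :=
  ∃ d : Cell ν, (c.1.1 : ℕ) = d.1.1 + 1 ∧ d.1.2 = c.1.2 ∧ τ d = v

def IsFree (a b : Fin r) (τ : Cell ν → Fin r) (c : Cell ν) : Prop :=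
  (τ c = a ∧ ¬HasBelow b τ c) ∨ (τ c = b ∧ ¬HasAbove a τ c)

def freeCells (a b : Fin r) (τ : Cell ν → Fin r) (i : Fin r) : Finset (Cell ν) :=
  {c | c.1.1 = i ∧ IsFree a b τ c}

def freeRank (a b : Fin r) (τ : Cell ν → Fin r) (c : Cell ν) : ℕ :=
  #{d ∈ freeCells a b τ c.1.1 | d.1.2 < c.1.2}

def freeCount (a b : Fin r) (τ : Cell ν → Fin r) (i v : Fin r) : ℕ :=
  #{d ∈ freeCells a b τ i | τ d = v}

/-- The Bender–Knuth involution: the free cells of each row read `a…ab…b`, and a row with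
`p` free `a`s and `q` free `b`s is refilled with `q` free `a`s and `p` free `b`s. -/
def benderKnuth (a b : Fin r) (τ : Cell ν → Fin r) (c : Cell ν) : Fin r :=
  if IsFree a b τ c then (if freeRank a b τ c < freeCount a b τ c.1.1 b then a else b) else τ c

lemma hasBelow_iff (hrow : (d.1.1 : ℕ) = c.1.1 + 1) (hcol : d.1.2 = c.1.2) :
    HasBelow v τ c ↔ τ d = v :=
  ⟨fun ⟨_, he1, he2, he3⟩ => Cell.ext (Fin.ext (by omega)) (hcol.trans he2.symm) ▸ he3,
    fun h => ⟨d, hrow, hcol, h⟩⟩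

lemma hasAbove_iff (hrow : (c.1.1 : ℕ) = d.1.1 + 1) (hcol : d.1.2 = c.1.2) :
    HasAbove v τ c ↔ τ d = v :=
  ⟨fun ⟨_, he1, he2, he3⟩ => Cell.ext (Fin.ext (by omega)) (hcol.trans he2.symm) ▸ he3,
    fun h => ⟨d, hrow, hcol, h⟩⟩

lemma IsFree.eq_or_eq (h : IsFree a b τ c) : τ c = a ∨ τ c = b :=
  h.imp And.left And.left

lemma not_isFree_and_eq_left_iff (hab : (a : ℕ) + 1 = b) :
    ¬IsFree a b τ c ∧ τ c = a ↔ τ c = a ∧ HasBelow b τ c := by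
  have : a ≠ b := by omega
  unfold IsFree
  constructor
  · rintro ⟨hnf, hca⟩
    exact ⟨hca, by_contra fun h => hnf (Or.inl ⟨hca, h⟩)⟩
  · rintro ⟨hca, hbel⟩
    exact ⟨by rintro (⟨_, h⟩ | ⟨h, _⟩) <;> simp_all, hca⟩

lemma not_isFree_and_eq_right_iff (hab : (a : ℕ) + 1 = b) :
    ¬IsFree a b τ c ∧ τ c = b ↔ τ c = b ∧ HasAbove a τ c := by
  have : a ≠ b := by omega
  unfold IsFree
  constructor
  · rintro ⟨hnf, hcb⟩
    exact ⟨hcb, by_contra fun h => hnf (Or.inr ⟨hcb, h⟩)⟩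
  · rintro ⟨hcb, habv⟩
    exact ⟨by rintro (⟨h, _⟩ | ⟨_, h⟩) <;> simp_all, hcb⟩

lemma IsFree.lt_below (hab : (a : ℕ) + 1 = b) (hτ : τ ∈ SSTFinset ν r) (hc : IsFree a b τ c)
    (hrow : (d.1.1 : ℕ) = c.1.1 + 1) (hcol : d.1.2 = c.1.2) : b < τ d := by
  have hlt := lt_of_sameCol hτ hcol.symm (Fin.lt_def.2 (by omega))
  rcases hc with ⟨hca, hnb⟩ | ⟨hcb, -⟩
  · have := (hasBelow_iff hrow hcol).not.1 hnb
    omega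
  · omega

lemma IsFree.above_lt (hab : (a : ℕ) + 1 = b) (hτ : τ ∈ SSTFinset ν r) (hc : IsFree a b τ c)
    (hrow : (c.1.1 : ℕ) = d.1.1 + 1) (hcol : d.1.2 = c.1.2) : τ d < a := by
  have hlt := lt_of_sameCol hτ hcol (Fin.lt_def.2 (by omega))
  rcases hc with ⟨hca, -⟩ | ⟨hcb, hna⟩
  · omega
  · have := (hasAbove_iff hrow hcol).not.1 hna
    omega

lemma hasBelow_of_col_le (hab : (a : ℕ) + 1 = b) (hτ : τ ∈ SSTFinset ν r)
    (hrow : c.1.1 = d.1.1) (hcol : c.1.2 ≤ d.1.2) (hc : τ c = a) (hd : HasBelow b τ d) :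
    HasBelow b τ c := by
  obtain ⟨e, he1, he2, he3⟩ := hd
  have hcell : c.1.2 < ν e.1.1 := (hcol.trans he2.ge).trans_lt e.col_lt
  let e' := mkCell ν e.1.1 c.1.2 hcell
  have h1 : τ e' ≤ τ e := le_of_sameRow hτ rfl (hcol.trans he2.ge)
  have h2 : τ c < τ e' := lt_of_sameCol hτ rfl (Fin.lt_def.2 (by simp [e', mkCell]; omega))
  exact ⟨e', by simp [e', mkCell]; omega, rfl, by omega⟩

lemma hasAbove_of_col_le (hν : Antitone ν) (hab : (a : ℕ) + 1 = b) (hτ : τ ∈ SSTFinset ν r)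
    (hrow : c.1.1 = d.1.1) (hcol : c.1.2 ≤ d.1.2) (hd : τ d = b) (hc : HasAbove a τ c) :
    HasAbove a τ d := by
  obtain ⟨e, he1, he2, he3⟩ := hc
  have hcell : d.1.2 < ν e.1.1 := d.col_lt.trans_le (hν (Fin.le_def.2 (by omega)))
  let e' := mkCell ν e.1.1 d.1.2 hcell
  have h1 : τ e ≤ τ e' := le_of_sameRow hτ rfl (he2.trans_le hcol)
  have h2 : τ e' < τ d := lt_of_sameCol hτ rfl (Fin.lt_def.2 (by simp [e', mkCell]; omega))
  exact ⟨e', by simp [e', mkCell]; omega, rfl, by omega⟩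

lemma mem_freeCells {i : Fin r} : c ∈ freeCells a b τ i ↔ c.1.1 = i ∧ IsFree a b τ c := by
  simp [freeCells]

lemma freeRank_eq {i : Fin r} (hc : c.1.1 = i) :
    freeRank a b τ c = #{d ∈ freeCells a b τ i | d.1.2 < c.1.2} := by
  rw [freeRank, hc]

lemma injOn_col_freeCells (i : Fin r) :
    Set.InjOn (fun c : Cell ν => c.1.2) (freeCells a b τ i) := fun _ hc _ hd hcd =>
  Cell.ext ((mem_freeCells.1 hc).1.trans (mem_freeCells.1 hd).1.symm) hcd

/-- Within a row the free `a`s precede the free `b`s. -/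
lemma freeRank_lt_freeCount_iff (hab : (a : ℕ) + 1 = b) (hτ : τ ∈ SSTFinset ν r)
    (hc : IsFree a b τ c) : freeRank a b τ c < freeCount a b τ c.1.1 a ↔ τ c = a := by
  rw [freeRank, freeCount]
  refine card_filter_lt_lt_card_filter_iff (injOn_col_freeCells _) (fun x hx y hy hyx hxa => ?_)
    (mem_freeCells.2 ⟨rfl, hc⟩)
  have hle :=
    le_of_sameRow hτ ((mem_freeCells.1 hy).1.trans (mem_freeCells.1 hx).1.symm) hyx.le
  have := (mem_freeCells.1 hy).2.eq_or_eq
  omega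

lemma freeCount_left_add_right (hab : (a : ℕ) + 1 = b) (i : Fin r) :
    freeCount a b τ i a + freeCount a b τ i b = #(freeCells a b τ i) := by
  rw [freeCount, freeCount,
    ← Finset.card_filter_add_card_filter_not (s := freeCells a b τ i) (p := fun d => τ d = a)]
  congr 2
  refine Finset.filter_congr fun d hd => ?_
  have := (mem_freeCells.1 hd).2.eq_or_eq
  omega

lemma card_filter_freeRank_lt {i : Fin r} {k : ℕ} (hk : k ≤ #(freeCells a b τ i)) :
    #{c ∈ freeCells a b τ i | freeRank a b τ c < k} = k := by
  refine Eq.trans (congrArg Finset.card ?_)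
    (card_filter_card_filter_lt_lt (injOn_col_freeCells i) hk)
  exact Finset.filter_congr fun c hc => by rw [freeRank_eq (mem_freeCells.1 hc).1]

lemma benderKnuth_of_not_isFree (h : ¬IsFree a b τ c) : benderKnuth a b τ c = τ c :=
  if_neg h

lemma benderKnuth_of_isFree (h : IsFree a b τ c) :
    benderKnuth a b τ c = if freeRank a b τ c < freeCount a b τ c.1.1 b then a else b :=
  if_pos h

lemma IsFree.benderKnuth_eq_or_eq (h : IsFree a b τ c) :
    benderKnuth a b τ c = a ∨ benderKnuth a b τ c = b := by
  rw [benderKnuth_of_isFree h]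
  split_ifs <;> simp

lemma benderKnuth_eq_iff_of_ne (hva : v ≠ a) (hvb : v ≠ b) :
    benderKnuth a b τ c = v ↔ τ c = v := by
  by_cases h : IsFree a b τ c
  · have := h.eq_or_eq
    have := h.benderKnuth_eq_or_eq
    constructor <;> intro <;> simp_all
  · rw [benderKnuth_of_not_isFree h]

lemma benderKnuth_le_of_sameRow (hν : Antitone ν) (hab : (a : ℕ) + 1 = b)
    (hτ : τ ∈ SSTFinset ν r) (hrow : c.1.1 = d.1.1) (hcol : c.1.2 ≤ d.1.2) :
    benderKnuth a b τ c ≤ benderKnuth a b τ d := by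
  have hle := le_of_sameRow hτ hrow hcol
  by_cases hc : IsFree a b τ c <;> by_cases hd : IsFree a b τ d
  · have hrank : freeRank a b τ c ≤ freeRank a b τ d := by
      rw [freeRank_eq rfl, freeRank_eq hrow.symm]
      exact Finset.card_le_card (Finset.monotone_filter_right _ fun e he => by omega)
    rw [benderKnuth_of_isFree hc, benderKnuth_of_isFree hd, ← hrow]
    split_ifs <;> omega
  · -- a free `a` to the left of a non-free `a` would also have a `b` below it
    have hda : τ d ≠ a := fun hda => by
      have hca : τ c = a := by have := hc.eq_or_eq; omega
      have hbel := ((not_isFree_and_eq_left_iff hab).1 ⟨hd, hda⟩).2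
      exact ((not_isFree_and_eq_left_iff hab).2
        ⟨hca, hasBelow_of_col_le hab hτ hrow hcol hca hbel⟩).1 hc
    have := hc.eq_or_eq
    have := hc.benderKnuth_eq_or_eq
    rw [benderKnuth_of_not_isFree hd]
    omega
  · have hcb : τ c ≠ b := fun hcb => by
      have hdb : τ d = b := by have := hd.eq_or_eq; omega
      have habv := ((not_isFree_and_eq_right_iff hab).1 ⟨hc, hcb⟩).2
      exact ((not_isFree_and_eq_right_iff hab).2
        ⟨hdb, hasAbove_of_col_le hν hab hτ hrow hcol hdb habv⟩).1 hd
    have := hd.eq_or_eq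
    have := hd.benderKnuth_eq_or_eq
    rw [benderKnuth_of_not_isFree hc]
    omega
  · rwa [benderKnuth_of_not_isFree hc, benderKnuth_of_not_isFree hd]

lemma benderKnuth_lt_below (hab : (a : ℕ) + 1 = b) (hτ : τ ∈ SSTFinset ν r)
    (hcol : c.1.2 = d.1.2) (hrow : (d.1.1 : ℕ) = c.1.1 + 1) :
    benderKnuth a b τ c < benderKnuth a b τ d := by
  have hlt := lt_of_sameCol hτ hcol (Fin.lt_def.2 (by omega))
  by_cases hc : IsFree a b τ c <;> by_cases hd : IsFree a b τ d
  · have := hc.lt_below hab hτ hrow hcol.symm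
    have := hd.eq_or_eq
    omega
  · have := hc.lt_below hab hτ hrow hcol.symm
    have := hc.benderKnuth_eq_or_eq
    rw [benderKnuth_of_not_isFree hd]
    omega
  · have := hd.above_lt hab hτ hrow hcol
    have := hd.benderKnuth_eq_or_eq
    rw [benderKnuth_of_not_isFree hc]
    omega
  · rwa [benderKnuth_of_not_isFree hc, benderKnuth_of_not_isFree hd]

lemma benderKnuth_mem (hν : Antitone ν) (hab : (a : ℕ) + 1 = b) (hτ : τ ∈ SSTFinset ν r) :
    benderKnuth a b τ ∈ SSTFinset ν r :=
  mem_SSTFinset_of_lt_below hν (fun _ _ => benderKnuth_le_of_sameRow hν hab hτ)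
    (fun _ _ => benderKnuth_lt_below hab hτ)

lemma hasBelow_benderKnuth (hab : (a : ℕ) + 1 = b) (hca : τ c = a) (h : HasBelow b τ c) :
    HasBelow b (benderKnuth a b τ) c := by
  obtain ⟨e, he1, he2, he3⟩ := h
  have hfree := ((not_isFree_and_eq_right_iff hab).2 ⟨he3, c, he1, he2.symm, hca⟩).1
  exact ⟨e, he1, he2, by rw [benderKnuth_of_not_isFree hfree, he3]⟩

lemma hasAbove_benderKnuth (hab : (a : ℕ) + 1 = b) (hcb : τ c = b) (h : HasAbove a τ c) :
    HasAbove a (benderKnuth a b τ) c := by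
  obtain ⟨e, he1, he2, he3⟩ := h
  have hfree := ((not_isFree_and_eq_left_iff hab).2 ⟨he3, c, he1, he2.symm, hcb⟩).1
  exact ⟨e, he1, he2, by rw [benderKnuth_of_not_isFree hfree, he3]⟩

lemma isFree_benderKnuth_iff (hab : (a : ℕ) + 1 = b) (hτ : τ ∈ SSTFinset ν r) :
    IsFree a b (benderKnuth a b τ) c ↔ IsFree a b τ c := by
  refine ⟨fun h => by_contra fun hc => ?_, fun hc => ?_⟩
  · have hbk := benderKnuth_of_not_isFree hc
    rcases h.eq_or_eq with hca | hcb
    · rw [hbk] at hca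
      have hbel := ((not_isFree_and_eq_left_iff hab).1 ⟨hc, hca⟩).2
      exact ((not_isFree_and_eq_left_iff hab).2
        ⟨hbk ▸ hca, hasBelow_benderKnuth hab hca hbel⟩).1 h
    · rw [hbk] at hcb
      have habv := ((not_isFree_and_eq_right_iff hab).1 ⟨hc, hcb⟩).2
      exact ((not_isFree_and_eq_right_iff hab).2
        ⟨hbk ▸ hcb, hasAbove_benderKnuth hab hcb habv⟩).1 h
  · -- the neighbours of a free cell are not free, so they keep their entries
    have hfix : ∀ e : Cell ν, (b < τ e ∨ τ e < a) → benderKnuth a b τ e = τ e := fun e he =>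
      benderKnuth_of_not_isFree fun hf => by have := hf.eq_or_eq; omega
    rcases hc.benderKnuth_eq_or_eq with hbk | hbk
    · refine Or.inl ⟨hbk, fun ⟨e, he1, he2, he3⟩ => ?_⟩
      have := hc.lt_below hab hτ he1 he2
      have := hfix e (Or.inl this)
      omega
    · refine Or.inr ⟨hbk, fun ⟨e, he1, he2, he3⟩ => ?_⟩
      have := hc.above_lt hab hτ he1 he2
      have := hfix e (Or.inr this)
      omega

lemma freeCells_benderKnuth (hab : (a : ℕ) + 1 = b) (hτ : τ ∈ SSTFinset ν r) (i : Fin r) :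
    freeCells a b (benderKnuth a b τ) i = freeCells a b τ i := by
  ext c
  simp only [mem_freeCells, isFree_benderKnuth_iff hab hτ]

lemma card_filter_freeCells_benderKnuth_eq (hab : (a : ℕ) + 1 = b) (i : Fin r) :
    #{c ∈ freeCells a b τ i | benderKnuth a b τ c = a} = freeCount a b τ i b := by
  refine Eq.trans (congrArg Finset.card (Finset.filter_congr fun c hc => ?_))
    (card_filter_freeRank_lt (Finset.card_filter_le _ (fun d => τ d = b)))
  obtain ⟨rfl, hcf⟩ := mem_freeCells.1 hc
  rw [benderKnuth_of_isFree hcf, freeCount]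
  split_ifs <;> omega

lemma freeCount_benderKnuth_right (hab : (a : ℕ) + 1 = b) (hτ : τ ∈ SSTFinset ν r)
    (i : Fin r) : freeCount a b (benderKnuth a b τ) i b = freeCount a b τ i a := by
  have hsum := freeCount_left_add_right (τ := benderKnuth a b τ) hab i
  have hleft : freeCount a b (benderKnuth a b τ) i a = freeCount a b τ i b := by
    rw [freeCount, freeCells_benderKnuth hab hτ]
    exact card_filter_freeCells_benderKnuth_eq hab i
  rw [freeCells_benderKnuth hab hτ, ← freeCount_left_add_right (τ := τ) hab i] at hsum
  omega

lemma benderKnuth_involutive (hab : (a : ℕ) + 1 = b) (hτ : τ ∈ SSTFinset ν r) :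
    benderKnuth a b (benderKnuth a b τ) = τ := by
  funext c
  by_cases hc : IsFree a b τ c
  · have hrank : freeRank a b (benderKnuth a b τ) c = freeRank a b τ c := by
      rw [freeRank, freeRank, freeCells_benderKnuth hab hτ]
    rw [benderKnuth_of_isFree ((isFree_benderKnuth_iff hab hτ).2 hc), hrank,
      freeCount_benderKnuth_right hab hτ]
    have := freeRank_lt_freeCount_iff hab hτ hc
    have := hc.eq_or_eq
    split_ifs <;> omega
  · rw [benderKnuth_of_not_isFree (mt (isFree_benderKnuth_iff hab hτ).1 hc),
      benderKnuth_of_not_isFree hc]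

lemma card_filter_isFree_and (P : Cell ν → Prop) [DecidablePred P] :
    #{c | IsFree a b τ c ∧ P c} = ∑ i, #{c ∈ freeCells a b τ i | P c} := by
  rw [Finset.card_eq_sum_card_fiberwise (f := fun c : Cell ν => c.1.1) (t := univ)
    fun _ _ => Finset.mem_univ _]
  refine Finset.sum_congr rfl fun i _ => congrArg Finset.card ?_
  ext c
  simp only [Finset.mem_filter, Finset.mem_univ, true_and, mem_freeCells]
  tauto

/-- The non-free entries pair up into vertical dominoes `a` over `b`. -/
lemma card_filter_hasBelow_eq :
    #{c | τ c = a ∧ HasBelow b τ c} = #{c | τ c = b ∧ HasAbove a τ c} := by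
  refine Finset.card_bij (fun c hc => (Finset.mem_filter.1 hc).2.2.choose)
    (fun c hc => ?_) (fun c₁ h₁ c₂ h₂ heq => ?_) (fun d hd => ?_)
  · obtain ⟨h1, h2, h3⟩ := (Finset.mem_filter.1 hc).2.2.choose_spec
    exact Finset.mem_filter.2
      ⟨Finset.mem_univ _, h3, c, h1, h2.symm, (Finset.mem_filter.1 hc).2.1⟩
  · obtain ⟨h1, h2, -⟩ := (Finset.mem_filter.1 h₁).2.2.choose_spec
    obtain ⟨h1', h2', -⟩ := (Finset.mem_filter.1 h₂).2.2.choose_spec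
    rw [heq] at h1 h2
    exact Cell.ext (Fin.ext (by omega)) (h2.symm.trans h2')
  · obtain ⟨hdb, e, he1, he2, he3⟩ := (Finset.mem_filter.1 hd).2
    have hem : e ∈ ({c | τ c = a ∧ HasBelow b τ c} : Finset (Cell ν)) :=
      Finset.mem_filter.2 ⟨Finset.mem_univ _, he3, d, he1, he2.symm, hdb⟩
    obtain ⟨h1, h2, -⟩ := (Finset.mem_filter.1 hem).2.2.choose_spec
    exact ⟨e, hem, Cell.ext (Fin.ext (by omega)) (h2.trans he2)⟩

lemma card_filter_benderKnuth_eq_left (hab : (a : ℕ) + 1 = b) :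
    #{c | benderKnuth a b τ c = a} = #{c | τ c = b} := by
  have hsplit : ∀ (σ : Cell ν → Fin r) (v : Fin r),
      #{c | σ c = v} =
        #{c | IsFree a b τ c ∧ σ c = v} + #{c | ¬IsFree a b τ c ∧ σ c = v} := by
    intro σ v
    rw [← Finset.card_filter_add_card_filter_not (p := IsFree a b τ), Finset.filter_filter,
      Finset.filter_filter]
    simp only [and_comm]
  have hlocked : ∀ v, #{c | ¬IsFree a b τ c ∧ benderKnuth a b τ c = v} =
      #{c | ¬IsFree a b τ c ∧ τ c = v} := fun v =>
    congrArg Finset.card (Finset.filter_congr fun c _ => and_congr_right fun hc => by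
      rw [benderKnuth_of_not_isFree hc])
  rw [hsplit (benderKnuth a b τ), hsplit τ, card_filter_isFree_and, card_filter_isFree_and,
    hlocked]
  congr 1
  · exact Finset.sum_congr rfl fun i _ => card_filter_freeCells_benderKnuth_eq hab i
  · simp only [not_isFree_and_eq_left_iff hab, not_isFree_and_eq_right_iff hab]
    exact card_filter_hasBelow_eq

lemma weight_benderKnuth (hab : (a : ℕ) + 1 = b) (hτ : τ ∈ SSTFinset ν r) :
    weight (benderKnuth a b τ) = weight (Equiv.swap a b ∘ τ) := by
  ext v
  simp only [weight_apply, Function.comp_apply, Equiv.swap_apply_eq_iff]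
  rcases eq_or_ne v a with rfl | hva
  · rw [Equiv.swap_apply_left]
    exact card_filter_benderKnuth_eq_left hab
  rcases eq_or_ne v b with hvb | hvb
  · have := card_filter_benderKnuth_eq_left hab (τ := benderKnuth a b τ)
    rw [benderKnuth_involutive hab hτ] at this
    rw [hvb, Equiv.swap_apply_right, this]
  · rw [Equiv.swap_apply_of_ne_of_ne hva hvb]
    exact congrArg Finset.card
      (Finset.filter_congr fun _ _ => benderKnuth_eq_iff_of_ne hva hvb)

end BenderKnuth

section Symmetric

variable {R : Type*} [CommSemiring R] {ν : Fin r → ℕ}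

lemma rename_swap_schurP (hν : Antitone ν) {a b : Fin r} (hab : (a : ℕ) + 1 = b) :
    rename (Equiv.swap a b) (schurP ν r R) = schurP ν r R := by
  rw [schurP, map_sum]
  refine Finset.sum_nbij' (benderKnuth a b) (benderKnuth a b)
    (fun τ hτ => benderKnuth_mem hν hab hτ) (fun τ hτ => benderKnuth_mem hν hab hτ)
    (fun τ hτ => benderKnuth_involutive hab hτ) (fun τ hτ => benderKnuth_involutive hab hτ)
    (fun τ hτ => ?_)
  simp only [map_prod, rename_X]
  rw [prod_X_eq_monomial_weight (benderKnuth a b τ), weight_benderKnuth hab hτ,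
    ← prod_X_eq_monomial_weight]
  rfl

theorem schurP_isSymmetric (hν : Antitone ν) : (schurP ν r R).IsSymmetric :=
  isSymmetric_of_rename_swap fun _ _ => rename_swap_schurP hν

end Symmetric

end Schur

open Schur

/-- The Schur polynomials `s_λ(u_1,...,u_r)`, as `λ` ranges over partitions with at most
`r` parts, form a `ℤ`-module basis of the ring `ℤ[u_1,...,u_r]^{S_r}` of symmetric
polynomials in `r` variables. -/
theorem stmt11 (r : ℕ) :
    ∃ b : Module.Basis {ν : Fin r → ℕ // Antitone ν} ℤ (symmSubmodule r ℤ),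
      ∀ ν, (b ν : MvPolynomial (Fin r) ℤ) = schurP ν.1 r ℤ := by
  obtain ⟨b, hb⟩ := exists_basis_of_unitriangular (antitoneCoeff (R := ℤ))
    antitoneCoeff_injective (fun ν => ⟨schurP ν.1 r ℤ, schurP_isSymmetric ν.2⟩)
    (m := fun ν => sumPartialSums ν.1) (fun ν => coeff_schurP_self ν.2)
    (fun _ _ h => eq_or_sumPartialSums_lt_of_coeff_schurP_ne_zero h)
  exact ⟨b, fun ν => by rw [hb]⟩

end
end
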